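/- arXiv:1706.09608 — 10 statements merged into one kernel-verified Lean document; each statement's English description precedes it below -/
import Mathlib

section
/- Let ℓ ≥ 1 and let G be a K_{ℓ,ℓ}-free finite simple graph on n vertices. Then the number of edges of G is at most ((ℓ−1)/2)^{1/ℓ} · n^{2−1/ℓ} + (1/2)(ℓ−1)n. -/
/-- `G` is `K_{ℓ,ℓ}`-free: there are no two disjoint sets of vertices `A, B` of size `ℓ`
with every vertex of `A` adjacent to every vertex of `B`. -/
def KllFree {V : Type*} [DecidableEq V] (G : SimpleGraph V) (ℓ : ℕ) : Prop :=
  ¬ ∃ A B : Finset V, Disjoint A B ∧ A.card = ℓ ∧ B.card = ℓ ∧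
      ∀ a ∈ A, ∀ b ∈ B, G.Adj a b

/-!
Count pairs `(v, S)` with `S` an `ℓ`-set in the neighbourhood of `v`. Each vertex contributes
`(deg v).choose ℓ`, while each `ℓ`-set `S` has fewer than `ℓ` common neighbours, or these would
form a `K_{ℓ,ℓ}` with `S`. Hence `∑ v, (deg v).choose ℓ ≤ (ℓ - 1) * n.choose ℓ`, which gives
`∑ v, (deg v - (ℓ - 1))^ℓ ≤ (ℓ - 1) n^ℓ`. By the power mean inequality the sum of the
`deg v - (ℓ - 1)`, which is `2e - (ℓ - 1) n`, is at most `(ℓ - 1)^(1/ℓ) n^(2 - 1/ℓ)`.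
-/

open Finset

lemma Real.rpow_le_two_mul_div_two_rpow {x p : ℝ} (hx : 0 ≤ x) (hp : p ≤ 1) :
    x ^ p ≤ 2 * (x / 2) ^ p := by
  have h2p : (2 : ℝ) ^ p ≤ 2 := by
    simpa using Real.rpow_le_rpow_of_exponent_le one_le_two hp
  rw [Real.div_rpow hx zero_le_two, ← mul_div_assoc, le_div_iff₀ (Real.rpow_pos_of_pos two_pos p),
    mul_comm]
  exact mul_le_mul_of_nonneg_right h2p (Real.rpow_nonneg hx p)

theorem Finset.sum_le_rpow_mul_card_rpow_of_sum_pow_le {ι : Type*} {s : Finset ι} {f : ι → ℝ}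
    (hf : ∀ i ∈ s, 0 ≤ f i) {ℓ : ℕ} (hℓ : ℓ ≠ 0) {c : ℝ} (hc : 0 ≤ c)
    (h : ∑ i ∈ s, f i ^ ℓ ≤ c * (#s : ℝ) ^ ℓ) :
    ∑ i ∈ s, f i ≤ c ^ (1 / ℓ : ℝ) * (#s : ℝ) ^ (2 - 1 / ℓ : ℝ) := by
  obtain ⟨m, rfl⟩ := Nat.exists_eq_succ_of_ne_zero hℓ
  set n : ℝ := (#s : ℝ)
  have hn : 0 ≤ n := Nat.cast_nonneg _
  have hbound : (c ^ (1 / (m + 1 : ℕ) : ℝ) * n ^ (2 - 1 / (m + 1 : ℕ) : ℝ)) ^ (m + 1)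
      = c * (n ^ m * n ^ (m + 1)) := by
    have hexp : (2 - ((m + 1 : ℕ) : ℝ)⁻¹) * (m + 1 : ℕ) = (m + (m + 1) : ℕ) := by
      push_cast; field_simp; ring
    rw [mul_pow, one_div, Real.rpow_inv_natCast_pow hc hℓ, ← Real.rpow_mul_natCast hn, hexp,
      Real.rpow_natCast, pow_add]
  rw [← pow_le_pow_iff_left₀ (sum_nonneg hf) (by positivity) hℓ, hbound]
  calc (∑ i ∈ s, f i) ^ (m + 1) ≤ n ^ m * ∑ i ∈ s, f i ^ (m + 1) :=
        pow_sum_le_card_mul_sum_pow hf m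
    _ ≤ n ^ m * (c * n ^ (m + 1)) := by gcongr
    _ = c * (n ^ m * n ^ (m + 1)) := by ring

namespace SimpleGraph

variable {V : Type*} [Fintype V] [DecidableEq V] (G : SimpleGraph V) [DecidableRel G.Adj]

theorem sum_degree_choose_eq_sum_card_commonNeighbors (ℓ : ℕ) :
    ∑ v, (G.degree v).choose ℓ =
      ∑ S ∈ (univ : Finset V).powersetCard ℓ, #{v | S ⊆ G.neighborFinset v} := by
  have hchoose (v : V) : (G.degree v).choose ℓ =
      #{S ∈ (univ : Finset V).powersetCard ℓ | S ⊆ G.neighborFinset v} := by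
    rw [← card_neighborFinset_eq_degree, ← card_powersetCard]
    congr 1
    ext S
    simp [and_comm]
  simp_rw [hchoose]
  exact sum_card_bipartiteAbove_eq_sum_card_bipartiteBelow _

end SimpleGraph

namespace KllFree

theorem pos {V : Type*} [DecidableEq V] {G : SimpleGraph V} {ℓ : ℕ} (hfree : KllFree G ℓ) :
    0 < ℓ :=
  Nat.pos_of_ne_zero fun hℓ ↦ hfree ⟨∅, ∅, disjoint_empty_left _, hℓ ▸ rfl, hℓ ▸ rfl, by simp⟩

variable {V : Type*} [Fintype V] [DecidableEq V] {G : SimpleGraph V} [DecidableRel G.Adj] {ℓ : ℕ}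

theorem card_commonNeighbors_lt (hfree : KllFree G ℓ) {S : Finset V} (hS : #S = ℓ) :
    #{v | S ⊆ G.neighborFinset v} < ℓ := by
  by_contra! h
  obtain ⟨A, hA, hAcard⟩ := exists_subset_card_eq h
  have hAdj : ∀ a ∈ A, ∀ b ∈ S, G.Adj a b := fun a ha b hb ↦
    (G.mem_neighborFinset a b).1 ((mem_filter.1 (hA ha)).2 hb)
  exact hfree ⟨A, S, disjoint_left.2 fun a ha haS ↦ G.irrefl (hAdj a ha a haS), hAcard, hS, hAdj⟩

theorem sum_degree_choose_le (hfree : KllFree G ℓ) :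
    ∑ v, (G.degree v).choose ℓ ≤ (ℓ - 1) * (Fintype.card V).choose ℓ := by
  rw [G.sum_degree_choose_eq_sum_card_commonNeighbors, ← card_univ, ← card_powersetCard,
    mul_comm, ← smul_eq_mul, ← sum_const]
  exact sum_le_sum fun S hS ↦
    Nat.le_sub_one_of_lt (hfree.card_commonNeighbors_lt (mem_powersetCard.1 hS).2)

theorem sum_pow_degree_sub_le (hfree : KllFree G ℓ) :
    ∑ v, (G.degree v - (ℓ - 1)) ^ ℓ ≤ (ℓ - 1) * Fintype.card V ^ ℓ := by
  have hℓ := hfree.pos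
  calc ∑ v, (G.degree v - (ℓ - 1)) ^ ℓ ≤ ∑ v, ℓ.factorial * (G.degree v).choose ℓ :=
        sum_le_sum fun v _ ↦ by
          rw [← Nat.descFactorial_eq_factorial_mul_choose, Nat.sub_sub_right _ hℓ]
          exact Nat.pow_sub_le_descFactorial _ _
    _ ≤ ℓ.factorial * ((ℓ - 1) * (Fintype.card V).choose ℓ) := by
        rw [← mul_sum]
        exact Nat.mul_le_mul_left _ hfree.sum_degree_choose_le
    _ = (ℓ - 1) * (Fintype.card V).descFactorial ℓ := by
        rw [Nat.descFactorial_eq_factorial_mul_choose]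
        ring
    _ ≤ (ℓ - 1) * Fintype.card V ^ ℓ := Nat.mul_le_mul_left _ (Nat.descFactorial_le_pow _ _)

theorem two_mul_card_edgeFinset_le (hfree : KllFree G ℓ) :
    2 * (#G.edgeFinset : ℝ) ≤ ((ℓ : ℝ) - 1) ^ (1 / ℓ : ℝ) * (Fintype.card V : ℝ) ^ (2 - 1 / ℓ : ℝ)
      + (ℓ - 1) * Fintype.card V := by
  have hk : ((ℓ - 1 : ℕ) : ℝ) = ℓ - 1 := Nat.cast_pred hfree.pos
  set b : V → ℝ := fun v ↦ ((G.degree v - (ℓ - 1) : ℕ) : ℝ)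
  have hpow : ∑ v, b v ^ ℓ ≤ ((ℓ : ℝ) - 1) * (#(univ : Finset V) : ℝ) ^ ℓ := by
    simp only [b, ← hk, card_univ]
    exact_mod_cast hfree.sum_pow_degree_sub_le
  have hsum := sum_le_rpow_mul_card_rpow_of_sum_pow_le (fun v _ ↦ Nat.cast_nonneg _)
    hfree.pos.ne' (hk ▸ Nat.cast_nonneg _) hpow
  have hdeg (v : V) : (G.degree v : ℝ) ≤ b v + (ℓ - 1) := by
    simp only [b, ← hk]
    exact_mod_cast le_tsub_add
  have hdegrees : 2 * (#G.edgeFinset : ℝ) = ∑ v, (G.degree v : ℝ) := by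
    exact_mod_cast G.sum_degrees_eq_twice_card_edges.symm
  calc 2 * (#G.edgeFinset : ℝ) ≤ ∑ v, (b v + (ℓ - 1)) := hdegrees ▸ sum_le_sum fun v _ ↦ hdeg v
    _ = ∑ v, b v + (ℓ - 1) * Fintype.card V := by
        rw [sum_add_distrib, sum_const, card_univ, nsmul_eq_mul, mul_comm]
    _ ≤ _ := by
        rw [card_univ] at hsum
        linarith

end KllFree

theorem kovari_sos_turan_general {V : Type*} [Fintype V] [DecidableEq V]
    (G : SimpleGraph V) [DecidableRel G.Adj] (ℓ : ℕ)
    (hfree : KllFree G ℓ) :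
    (G.edgeFinset.card : ℝ) ≤
      ((ℓ - 1 : ℝ) / 2) ^ ((1 : ℝ) / ℓ) * (Fintype.card V : ℝ) ^ (2 - (1 : ℝ) / ℓ)
        + (1 / 2 : ℝ) * (ℓ - 1) * Fintype.card V := by
  have hℓ : (1 : ℝ) ≤ ℓ := by exact_mod_cast hfree.pos
  have hroot := Real.rpow_le_two_mul_div_two_rpow (x := (ℓ : ℝ) - 1) (p := 1 / ℓ)
    (by linarith) (div_le_one_of_le₀ hℓ (by positivity))
  have hn : 0 ≤ (Fintype.card V : ℝ) ^ (2 - (1 : ℝ) / ℓ) := by positivity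
  linarith [hfree.two_mul_card_edgeFinset_le, mul_le_mul_of_nonneg_right hroot hn]

theorem kovari_sos_turan {V : Type*} [Fintype V] [DecidableEq V]
    (G : SimpleGraph V) [DecidableRel G.Adj] (ℓ : ℕ) (hℓ : 1 ≤ ℓ)
    (hfree : KllFree G ℓ) :
    (G.edgeFinset.card : ℝ) ≤
      ((ℓ - 1 : ℝ) / 2) ^ ((1 : ℝ) / ℓ) * (Fintype.card V : ℝ) ^ (2 - (1 : ℝ) / ℓ)
        + (1 / 2 : ℝ) * (ℓ - 1) * Fintype.card V :=
  kovari_sos_turan_general G ℓ hfree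
end

section
/- Let ℓ ≥ 1 and let G be a finite simple graph together with two disjoint sets of vertices A and B with |A| = n ≥ ℓ and |B| = m ≥ ℓ, such that every edge of G joins a vertex of A to a vertex of B. Suppose there are no sets S ⊆ A and T ⊆ B with |S| = |T| = ℓ such that every vertex of S is adjacent to every vertex of T. Then the number of edges of G is at most (ℓ−1)^{1/ℓ} · (n−ℓ+1) · m^{1−1/ℓ} + (ℓ−1)m. -/
/-!
Count the pairs `(S, b)` with `b ∈ B` and `S` an `ℓ`-subset of the neighbourhood of `b`: since no
`ℓ`-subset of `A` has `ℓ` common neighbours, `∑ b, (d b).choose ℓ ≤ (ℓ - 1) * n.choose ℓ`. Comparing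
falling factorials gives `(d - ℓ + 1) ^ ℓ * n.choose ℓ ≤ (n - ℓ + 1) ^ ℓ * d.choose ℓ`, so the numbers
`x b = max (d b - ℓ + 1) 0` satisfy `∑ b, x b ^ ℓ ≤ (ℓ - 1) * (n - ℓ + 1) ^ ℓ`, and Hölder's inequality
bounds `∑ b, d b ≤ ∑ b, x b + (ℓ - 1) * m`.
-/

open Finset

namespace Finset

variable {α β : Type*} (r : α → β → Prop) [∀ a b, Decidable (r a b)]

theorem powersetCard_bipartiteBelow (s : Finset α) (k : ℕ) (b : β) :
    (s.bipartiteBelow r b).powersetCard k = (s.powersetCard k).filter (∀ a ∈ ·, r a b) := by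
  ext S
  simp only [mem_filter, mem_powersetCard, bipartiteBelow, subset_iff]
  grind

theorem sum_choose_card_bipartiteBelow_le {s : Finset α} {t : Finset β} {k l : ℕ}
    (h : ∀ S ⊆ s, ∀ T ⊆ t, #S = k → #T = l → ¬ ∀ a ∈ S, ∀ b ∈ T, r a b) :
    ∑ b ∈ t, (#(s.bipartiteBelow r b)).choose k ≤ (l - 1) * (#s).choose k := by
  let R : Finset α → β → Prop := fun S b => ∀ a ∈ S, r a b
  have hcommon : ∀ S ∈ s.powersetCard k, #(t.bipartiteAbove R S) ≤ l - 1 := by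
    intro S hS
    rw [mem_powersetCard] at hS
    by_contra! hlt
    obtain ⟨T, hT, hTl⟩ := exists_subset_card_eq (Nat.le_of_pred_lt hlt)
    exact h S hS.1 T (hT.trans (filter_subset _ _)) hS.2 hTl
      fun a ha b hb => (mem_filter.1 (hT hb)).2 a ha
  calc ∑ b ∈ t, (#(s.bipartiteBelow r b)).choose k
      = ∑ b ∈ t, #((s.powersetCard k).bipartiteBelow R b) := by
        simp only [← card_powersetCard, powersetCard_bipartiteBelow]
        rfl
    _ = ∑ S ∈ s.powersetCard k, #(t.bipartiteAbove R S) :=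
        (sum_card_bipartiteAbove_eq_sum_card_bipartiteBelow R).symm
    _ ≤ ∑ _S ∈ s.powersetCard k, (l - 1) := sum_le_sum hcommon
    _ = (l - 1) * (#s).choose k := by rw [sum_const, card_powersetCard, smul_eq_mul, mul_comm]

end Finset

theorem Nat.sub_add_one_pow_mul_descFactorial_le {ℓ d n : ℕ} (hℓd : ℓ ≤ d) (hdn : d ≤ n) :
    (d + 1 - ℓ) ^ ℓ * n.descFactorial ℓ ≤ (n + 1 - ℓ) ^ ℓ * d.descFactorial ℓ := by
  simp only [descFactorial_eq_prod_range, pow_eq_prod_const, ← prod_mul_distrib]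
  refine prod_le_prod' fun i hi => ?_
  have hiℓ : i + 1 ≤ ℓ := mem_range.1 hi
  zify [hℓd.trans (d.le_add_right 1), (hℓd.trans hdn).trans (n.le_add_right 1),
    (hiℓ.trans hℓd).trans' i.le_succ, ((hiℓ.trans hℓd).trans hdn).trans' i.le_succ]
  -- the difference of the two sides is `(ℓ - 1 - i) * (n - d)`
  nlinarith [mul_nonneg (sub_nonneg.2 (Int.ofNat_le.2 hiℓ)) (sub_nonneg.2 (Int.ofNat_le.2 hdn))]

theorem Nat.sub_add_one_pow_mul_choose_le {ℓ d n : ℕ} (hℓd : ℓ ≤ d) (hdn : d ≤ n) :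
    (d + 1 - ℓ) ^ ℓ * n.choose ℓ ≤ (n + 1 - ℓ) ^ ℓ * d.choose ℓ := by
  have := sub_add_one_pow_mul_descFactorial_le hℓd hdn
  simp only [descFactorial_eq_factorial_mul_choose, mul_left_comm _ ℓ.factorial] at this
  exact Nat.le_of_mul_le_mul_left this ℓ.factorial_pos

theorem max_sub_add_one_pow_mul_choose_le {ℓ d n : ℕ} (hℓ : 1 ≤ ℓ) (hdn : d ≤ n) :
    max ((d : ℝ) - ℓ + 1) 0 ^ ℓ * n.choose ℓ ≤ ((n : ℝ) - ℓ + 1) ^ ℓ * d.choose ℓ := by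
  rcases lt_or_ge d ℓ with hdℓ | hℓd
  · rw [max_eq_right (by linarith [show (d : ℝ) + 1 ≤ ℓ by exact_mod_cast hdℓ]),
      zero_pow (by omega), zero_mul, Nat.choose_eq_zero_of_lt hdℓ, Nat.cast_zero, mul_zero]
  · have hcast : ∀ k : ℕ, ℓ ≤ k → ((k + 1 - ℓ : ℕ) : ℝ) = (k : ℝ) - ℓ + 1 := fun k hk => by
      rw [Nat.cast_sub (hk.trans k.le_succ)]; push_cast; ring
    rw [max_eq_left (by linarith [show (ℓ : ℝ) ≤ d by exact_mod_cast hℓd]), ← hcast d hℓd,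
      ← hcast n (hℓd.trans hdn)]
    exact_mod_cast Nat.sub_add_one_pow_mul_choose_le hℓd hdn

theorem Real.sum_le_of_sum_pow_le {ι : Type*} {s : Finset ι} {x : ι → ℝ} {ℓ : ℕ} {c N : ℝ}
    (hℓ : 1 ≤ ℓ) (hx : ∀ i, 0 ≤ x i) (hc : 0 ≤ c) (hN : 0 ≤ N)
    (h : ∑ i ∈ s, x i ^ ℓ ≤ c * N ^ ℓ) :
    ∑ i ∈ s, x i ≤ c ^ (1 / ℓ : ℝ) * N * (#s : ℝ) ^ (1 - 1 / ℓ : ℝ) := by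
  have hHolder := inner_le_weight_mul_Lp_of_nonneg s (p := ℓ) (by exact_mod_cast hℓ) (fun _ => 1) x
    (fun _ => zero_le_one) hx
  simp only [one_mul, sum_const, nsmul_eq_mul, mul_one, rpow_natCast] at hHolder
  calc ∑ i ∈ s, x i ≤ (#s : ℝ) ^ (1 - (ℓ : ℝ)⁻¹) * (∑ i ∈ s, x i ^ ℓ) ^ (ℓ : ℝ)⁻¹ := hHolder
    _ ≤ (#s : ℝ) ^ (1 - (ℓ : ℝ)⁻¹) * (c * N ^ ℓ) ^ (ℓ : ℝ)⁻¹ := by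
        gcongr
        exact sum_nonneg fun i _ => pow_nonneg (hx i) ℓ
    _ = c ^ (1 / ℓ : ℝ) * N * (#s : ℝ) ^ (1 - 1 / ℓ : ℝ) := by
        rw [mul_rpow hc (by positivity), pow_rpow_inv_natCast hN (by omega), one_div]
        ring

theorem sum_le_of_sum_choose_le {ι : Type*} {s : Finset ι} {f : ι → ℕ} {ℓ n : ℕ} {c : ℝ}
    (hℓ : 1 ≤ ℓ) (hℓn : ℓ ≤ n) (hc : 0 ≤ c) (hf : ∀ i ∈ s, f i ≤ n)
    (h : ∑ i ∈ s, ((f i).choose ℓ : ℝ) ≤ c * n.choose ℓ) :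
    ∑ i ∈ s, (f i : ℝ) ≤
      c ^ (1 / ℓ : ℝ) * (n - ℓ + 1) * (#s : ℝ) ^ (1 - 1 / ℓ : ℝ) + (ℓ - 1) * #s := by
  set x : ι → ℝ := fun i => max ((f i : ℝ) - ℓ + 1) 0
  have hchoose : (0 : ℝ) < n.choose ℓ := by exact_mod_cast Nat.choose_pos hℓn
  have hN : (0 : ℝ) ≤ n - ℓ + 1 := by linarith [show (ℓ : ℝ) ≤ n by exact_mod_cast hℓn]
  have hpow : ∑ i ∈ s, x i ^ ℓ ≤ c * ((n : ℝ) - ℓ + 1) ^ ℓ := by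
    rw [← mul_le_mul_iff_of_pos_right hchoose, sum_mul]
    calc ∑ i ∈ s, x i ^ ℓ * n.choose ℓ ≤ ∑ i ∈ s, ((n : ℝ) - ℓ + 1) ^ ℓ * (f i).choose ℓ :=
          sum_le_sum fun i hi => max_sub_add_one_pow_mul_choose_le hℓ (hf i hi)
      _ ≤ ((n : ℝ) - ℓ + 1) ^ ℓ * (c * n.choose ℓ) := by
          rw [← mul_sum]
          exact mul_le_mul_of_nonneg_left h (pow_nonneg hN ℓ)
      _ = c * ((n : ℝ) - ℓ + 1) ^ ℓ * n.choose ℓ := by ring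
  have hx := Real.sum_le_of_sum_pow_le hℓ (fun i => le_max_right _ _) hc hN hpow
  calc ∑ i ∈ s, (f i : ℝ) ≤ ∑ i ∈ s, (x i + (ℓ - 1)) :=
        sum_le_sum fun i _ => by linarith [le_max_left ((f i : ℝ) - ℓ + 1) 0]
    _ = ∑ i ∈ s, x i + (ℓ - 1) * #s := by rw [sum_add_distrib, sum_const, nsmul_eq_mul, mul_comm]
    _ ≤ _ := add_le_add_left hx _

theorem kovari_sos_turan_bipartite_general {V : Type*} [Fintype V]
    (G : SimpleGraph V) [DecidableRel G.Adj] (ℓ n m : ℕ) (hℓ : 1 ≤ ℓ)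
    (A B : Finset V) (hdisj : Disjoint A B)
    (hA : A.card = n) (hB : B.card = m) (hn : ℓ ≤ n)
    (hbip : ∀ u v : V, G.Adj u v → (u ∈ A ∧ v ∈ B) ∨ (u ∈ B ∧ v ∈ A))
    (hfree : ¬ ∃ S T : Finset V, S ⊆ A ∧ T ⊆ B ∧ S.card = ℓ ∧ T.card = ℓ ∧
        ∀ s ∈ S, ∀ t ∈ T, G.Adj s t) :
    (G.edgeFinset.card : ℝ) ≤
      (ℓ - 1 : ℝ) ^ ((1 : ℝ) / ℓ) * ((n : ℝ) - ℓ + 1) * (m : ℝ) ^ (1 - (1 : ℝ) / ℓ)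
        + (ℓ - 1 : ℝ) * m := by
  have hG : G.IsBipartiteWith A B := ⟨disjoint_coe.2 hdisj, hbip⟩
  have hedges : (#G.edgeFinset : ℝ) = ∑ b ∈ B, (#(A.bipartiteBelow G.Adj b) : ℝ) := by
    rw [← SimpleGraph.isBipartiteWith_sum_degrees_eq_card_edges' hG, Nat.cast_sum]
    refine sum_congr rfl fun b hb => ?_
    rw [← SimpleGraph.card_neighborFinset_eq_degree,
      SimpleGraph.isBipartiteWith_bipartiteBelow hG hb]
  have hcodegrees : ∑ b ∈ B, ((#(A.bipartiteBelow G.Adj b)).choose ℓ : ℝ) ≤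
      (ℓ - 1 : ℝ) * n.choose ℓ := by
    have := sum_choose_card_bipartiteBelow_le G.Adj
      fun S hS T hT hSℓ hTℓ hST => hfree ⟨S, T, hS, hT, hSℓ, hTℓ, hST⟩
    rw [hA] at this
    rw [← Nat.cast_one, ← Nat.cast_sub hℓ]
    exact_mod_cast this
  rw [hedges, ← hB]
  exact sum_le_of_sum_choose_le hℓ hn (sub_nonneg.2 (by exact_mod_cast hℓ))
    (fun b _ => hA ▸ card_filter_le _ _) hcodegrees

theorem kovari_sos_turan_bipartite {V : Type*} [Fintype V] [DecidableEq V]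
    (G : SimpleGraph V) [DecidableRel G.Adj] (ℓ n m : ℕ) (hℓ : 1 ≤ ℓ)
    (A B : Finset V) (hdisj : Disjoint A B)
    (hA : A.card = n) (hB : B.card = m) (hn : ℓ ≤ n) (hm : ℓ ≤ m)
    (hbip : ∀ u v : V, G.Adj u v → (u ∈ A ∧ v ∈ B) ∨ (u ∈ B ∧ v ∈ A))
    (hfree : ¬ ∃ S T : Finset V, S ⊆ A ∧ T ⊆ B ∧ S.card = ℓ ∧ T.card = ℓ ∧
        ∀ s ∈ S, ∀ t ∈ T, G.Adj s t) :
    (G.edgeFinset.card : ℝ) ≤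
      (ℓ - 1 : ℝ) ^ ((1 : ℝ) / ℓ) * ((n : ℝ) - ℓ + 1) * (m : ℝ) ^ (1 - (1 : ℝ) / ℓ)
        + (ℓ - 1 : ℝ) * m :=
  kovari_sos_turan_bipartite_general G ℓ n m hℓ A B hdisj hA hB hn hbip hfree
end

section
/- Let ℓ ≥ 1 and k ≥ 1. Every K_{ℓ,ℓ}-free finite simple graph on n vertices with n ≥ ℓ·(4k)^ℓ has a vertex of degree strictly less than n/k. -/
/-!
Suppose every degree is at least `n / k`. In a `K_{ℓ,ℓ}`-free graph an `ℓ`-set `A` has fewer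
than `2ℓ` common neighbours, since otherwise `ℓ` of them lie outside `A` and span a `K_{ℓ,ℓ}`
with `A`. Counting pairs `(v, A)` with `A` an `ℓ`-subset of the neighbourhood of `v` gives
`n · C(n/k, ℓ) ≤ ∑ᵥ C(deg v, ℓ) ≤ 2ℓ · C(n, ℓ)`. As `n ≥ 4kℓ`, the left side is at least
`n · (3n / 4k)^ℓ / ℓ!`, hence `3^ℓ n ≤ 2ℓ (4k)^ℓ ≤ 2n`, which is absurd.
-/

open Finset

namespace SimpleGraph

variable {V : Type*} [Fintype V] [DecidableEq V] (G : SimpleGraph V) [DecidableRel G.Adj]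

def commonNeighborFinset (A : Finset V) : Finset V := {v | A ⊆ G.neighborFinset v}

theorem sum_choose_degree_eq_sum_card_commonNeighborFinset (ℓ : ℕ) :
    ∑ v, (G.degree v).choose ℓ = ∑ A ∈ powersetCard ℓ univ, #(G.commonNeighborFinset A) := by
  refine (sum_congr rfl fun v _ => ?_).trans
    (sum_card_bipartiteAbove_eq_sum_card_bipartiteBelow (r := fun v A => A ⊆ G.neighborFinset v))
  rw [← card_neighborFinset_eq_degree, ← card_powersetCard, bipartiteAbove]
  congr 1
  ext A
  simp [mem_powersetCard, and_comm]

end SimpleGraph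

open SimpleGraph

section

variable {V : Type*} [Fintype V] [DecidableEq V] {G : SimpleGraph V} [DecidableRel G.Adj]
  {ℓ : ℕ}

theorem KllFree.card_commonNeighborFinset_lt (hfree : KllFree G ℓ) {A : Finset V}
    (hA : #A = ℓ) : #(G.commonNeighborFinset A) < 2 * ℓ := by
  by_contra! hbig
  obtain ⟨B, hB, hBcard⟩ : ∃ B ⊆ G.commonNeighborFinset A \ A, #B = ℓ :=
    exists_subset_card_eq (by have := le_card_sdiff A (G.commonNeighborFinset A); omega)
  refine hfree ⟨A, B, (disjoint_sdiff.mono_right hB), hA, hBcard, fun a ha b hb => ?_⟩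
  have hb : A ⊆ G.neighborFinset b := by
    simpa [commonNeighborFinset] using (mem_sdiff.1 (hB hb)).1
  exact (G.mem_neighborFinset _ _).1 (hb ha) |>.symm

theorem KllFree.sum_choose_degree_le (hfree : KllFree G ℓ) :
    ∑ v, (G.degree v).choose ℓ ≤ 2 * ℓ * (Fintype.card V).choose ℓ := by
  rw [sum_choose_degree_eq_sum_card_commonNeighborFinset, ← card_univ, ← card_powersetCard,
    mul_comm, ← smul_eq_mul, ← sum_const]
  exact sum_le_sum fun A hA => (hfree.card_commonNeighborFinset_lt (mem_powersetCard.1 hA).2).le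

theorem KllFree.card_mul_pow_le (hfree : KllFree G ℓ) :
    Fintype.card V * (G.minDegree + 1 - ℓ) ^ ℓ ≤ 2 * ℓ * Fintype.card V ^ ℓ := by
  set n := Fintype.card V
  have hcount : n * (G.minDegree).choose ℓ ≤ 2 * ℓ * n.choose ℓ := calc
    n * (G.minDegree).choose ℓ = ∑ _v : V, (G.minDegree).choose ℓ := by simp [n]
    _ ≤ ∑ v, (G.degree v).choose ℓ :=
      sum_le_sum fun v _ => Nat.choose_le_choose ℓ (G.minDegree_le_degree v)
    _ ≤ 2 * ℓ * n.choose ℓ := hfree.sum_choose_degree_le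
  calc n * (G.minDegree + 1 - ℓ) ^ ℓ ≤ n * (G.minDegree).descFactorial ℓ :=
        Nat.mul_le_mul_left _ (Nat.pow_sub_le_descFactorial _ ℓ)
    _ = ℓ.factorial * (n * (G.minDegree).choose ℓ) := by
        rw [Nat.descFactorial_eq_factorial_mul_choose]; ring
    _ ≤ ℓ.factorial * (2 * ℓ * n.choose ℓ) := Nat.mul_le_mul_left _ hcount
    _ = 2 * ℓ * n.descFactorial ℓ := by rw [Nat.descFactorial_eq_factorial_mul_choose]; ring
    _ ≤ 2 * ℓ * n ^ ℓ := Nat.mul_le_mul_left _ (Nat.descFactorial_le_pow n ℓ)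

end

theorem Nat.three_mul_le_four_mul_mul_add_one_sub {n k d ℓ : ℕ} (hd : n ≤ k * d)
    (hn : 4 * k * ℓ ≤ n) : 3 * n ≤ 4 * k * (d + 1 - ℓ) := by
  rw [mul_assoc] at hn
  rw [Nat.mul_sub, Nat.mul_add, mul_one, mul_assoc, mul_assoc]
  omega

theorem Nat.lt_mul_pow_add_one_sub {n k d ℓ : ℕ} (hℓ : 1 ≤ ℓ) (hk : 1 ≤ k)
    (hn : ℓ * (4 * k) ^ ℓ ≤ n) (hd : n ≤ k * d) : 2 * ℓ * n ^ ℓ < n * (d + 1 - ℓ) ^ ℓ := by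
  by_contra! hle
  have hn₀ : 0 < n := lt_of_lt_of_le (by positivity) hn
  have h4kℓ : 4 * k * ℓ ≤ n := calc
    4 * k * ℓ = ℓ * (4 * k) ^ 1 := by ring
    _ ≤ ℓ * (4 * k) ^ ℓ := Nat.mul_le_mul_left _ (Nat.pow_le_pow_right (by omega) hℓ)
    _ ≤ n := hn
  have h3n := Nat.pow_le_pow_left (three_mul_le_four_mul_mul_add_one_sub hd h4kℓ) ℓ
  have : 3 ^ ℓ * n ^ (ℓ + 1) ≤ 2 * n ^ (ℓ + 1) := calc
    3 ^ ℓ * n ^ (ℓ + 1) = n * (3 * n) ^ ℓ := by ring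
    _ ≤ n * (4 * k * (d + 1 - ℓ)) ^ ℓ := Nat.mul_le_mul_left _ h3n
    _ = (4 * k) ^ ℓ * (n * (d + 1 - ℓ) ^ ℓ) := by ring
    _ ≤ (4 * k) ^ ℓ * (2 * ℓ * n ^ ℓ) := Nat.mul_le_mul_left _ hle
    _ = 2 * (ℓ * (4 * k) ^ ℓ) * n ^ ℓ := by ring
    _ ≤ 2 * n * n ^ ℓ := by gcongr
    _ = 2 * n ^ (ℓ + 1) := by ring
  have := Nat.le_of_mul_le_mul_right this (by positivity)
  have := Nat.pow_le_pow_right (show 0 < 3 by norm_num) hℓ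
  omega

theorem small_degree_vertex {V : Type*} [Fintype V] [DecidableEq V]
    (G : SimpleGraph V) [DecidableRel G.Adj] (ℓ k : ℕ) (hℓ : 1 ≤ ℓ) (hk : 1 ≤ k)
    (hfree : KllFree G ℓ) (hn : ℓ * (4 * k) ^ ℓ ≤ Fintype.card V) :
    ∃ v : V, (G.degree v : ℝ) < (Fintype.card V : ℝ) / k := by
  by_contra! hdeg
  have : Nonempty V := Fintype.card_pos_iff.1 (lt_of_lt_of_le (by positivity) hn)
  obtain ⟨v₀, hv₀⟩ := G.exists_minimal_degree_vertex
  have hmin : Fintype.card V ≤ k * G.minDegree := by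
    have := hdeg v₀
    rw [div_le_iff₀ (by positivity), ← hv₀] at this
    rw [mul_comm]
    exact_mod_cast this
  exact (Nat.lt_mul_pow_add_one_sub hℓ hk hn hmin).not_ge hfree.card_mul_pow_le
end

section
/- Let ℓ ≥ 1 and k ≥ 1. Every K_{ℓ,ℓ}-free finite simple graph with at least k·ℓ·(4k)^ℓ vertices contains an independent set of size k. -/
/-- Greedy independent set: if every vertex of `S` has "degree within `S`" at most
`S.card / k - 1` (in the form `k * (d + 1) ≤ S.card`), then `S` contains an
independent set of size `k`. -/
lemma kll_greedy {V : Type*} [DecidableEq V] (G : SimpleGraph V) [DecidableRel G.Adj] :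
    ∀ (k : ℕ) (S : Finset V),
      (∀ v ∈ S, k * ((S.filter (G.Adj v)).card + 1) ≤ S.card) → k ≤ S.card →
      ∃ I : Finset V, I ⊆ S ∧ I.card = k ∧ ∀ a ∈ I, ∀ b ∈ I, a ≠ b → ¬ G.Adj a b := by
  intro k
  induction k with
  | zero =>
    intro S _ _
    exact ⟨∅, by simp, by simp, by simp⟩
  | succ k ih =>
    intro S hdeg hcard
    have hS : S.Nonempty := Finset.card_pos.mp (by omega)
    obtain ⟨v, hvS, hvmax⟩ := Finset.exists_max_image S (fun v => (S.filter (G.Adj v)).card) hS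
    set D := S.filter (G.Adj v) with hD
    set S' := S \ insert v D with hS'
    have hsub : S' ⊆ S := Finset.sdiff_subset
    have hins : (insert v D).card ≤ D.card + 1 := Finset.card_insert_le _ _
    have hScard : S.card ≤ S'.card + (D.card + 1) := by
      have h1 : S.card - (insert v D).card ≤ S'.card := by
        rw [hS']
        exact Finset.le_card_sdiff _ _
      omega
    have hv := hdeg v hvS
    -- degree bound for vertices of S'
    have hdeg' : ∀ w ∈ S', k * ((S'.filter (G.Adj w)).card + 1) ≤ S'.card := by
      intro w hw
      have hwS : w ∈ S := hsub hw
      have h1 : (S'.filter (G.Adj w)).card ≤ (S.filter (G.Adj w)).card :=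
        Finset.card_le_card (Finset.filter_subset_filter _ hsub)
      have h2 : (S.filter (G.Adj w)).card ≤ D.card := hvmax w hwS
      have : (k + 1) * ((S.filter (G.Adj w)).card + 1) ≤ S.card := hdeg w hwS
      nlinarith [hv, hScard]
    have hcard' : k ≤ S'.card := by nlinarith [hv, hScard]
    obtain ⟨I, hIsub, hIcard, hIindep⟩ := ih S' hdeg' hcard'
    have hvI : v ∉ I := by
      intro hvI
      have := hIsub hvI
      rw [hS'] at this
      exact (Finset.mem_sdiff.mp this).2 (Finset.mem_insert_self _ _)
    refine ⟨insert v I, ?_, ?_, ?_⟩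
    · intro x hx
      rcases Finset.mem_insert.mp hx with h | h
      · exact h ▸ hvS
      · exact hsub (hIsub h)
    · rw [Finset.card_insert_of_notMem hvI, hIcard]
    · intro a ha b hb hab
      have hnadj : ∀ w ∈ I, ¬ G.Adj v w := by
        intro w hw hadj
        have hwS' := hIsub hw
        rw [hS'] at hwS'
        have hwS : w ∈ S := (Finset.mem_sdiff.mp hwS').1
        have : w ∈ insert v D := by
          refine Finset.mem_insert_of_mem ?_
          rw [hD]; exact Finset.mem_filter.mpr ⟨hwS, hadj⟩
        exact (Finset.mem_sdiff.mp hwS').2 this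
      rcases Finset.mem_insert.mp ha with rfl | ha'
      · rcases Finset.mem_insert.mp hb with rfl | hb'
        · exact absurd rfl hab
        · exact hnadj b hb'
      · rcases Finset.mem_insert.mp hb with rfl | hb'
        · intro hadj; exact hnadj a ha' hadj.symm
        · exact hIindep a ha' b hb' hab

lemma kll_step {V : Type*} [DecidableEq V] (G : SimpleGraph V) [DecidableRel G.Adj]
    (ℓ k : ℕ) (hℓ : 1 ≤ ℓ) (hk : 1 ≤ k) (hfree : KllFree G ℓ) :
    ∀ (r : ℕ) (S A : Finset V), A.card + r = ℓ → Disjoint A S →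
      (∀ a ∈ A, ∀ s ∈ S, G.Adj a s) → k * ℓ * (4 * k) ^ r ≤ S.card →
      ∃ I : Finset V, I.card = k ∧ ∀ a ∈ I, ∀ b ∈ I, a ≠ b → ¬ G.Adj a b := by
  intro r
  induction r with
  | zero =>
    intro S A hA hdisj hadj hsize
    exfalso
    have hℓS : ℓ ≤ S.card := by
      simp only [pow_zero, mul_one] at hsize
      nlinarith
    obtain ⟨B, hBsub, hBcard⟩ := Finset.exists_subset_card_eq hℓS
    refine hfree ⟨A, B, ?_, by omega, hBcard, ?_⟩
    · exact hdisj.mono_right hBsub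
    · exact fun a ha b hb => hadj a ha b (hBsub hb)
  | succ r ih =>
    intro S A hA hdisj hadj hsize
    have hx : 1 ≤ (4 * k) ^ r := Nat.one_le_pow _ _ (by omega)
    by_cases hcase : ∀ v ∈ S, k * ((S.filter (G.Adj v)).card + 1) ≤ S.card
    · have hkS : k ≤ S.card := by
        have : k * 1 * 1 ≤ k * ℓ * (4 * k) ^ (r + 1) := by
          apply Nat.mul_le_mul (Nat.mul_le_mul_left _ hℓ) (Nat.one_le_pow _ _ (by omega))
        omega
      obtain ⟨I, _, hIcard, hIindep⟩ := kll_greedy G k S hcase hkS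
      exact ⟨I, hIcard, hIindep⟩
    · push_neg at hcase
      obtain ⟨v, hvS, hvdeg⟩ := hcase
      set S' := S.filter (G.Adj v) with hS'
      have hvA : v ∉ A := fun h => (Finset.disjoint_left.mp hdisj h) hvS
      have hpow : (4 * k) ^ (r + 1) = (4 * k) ^ r * (4 * k) := pow_succ _ _
      have hsize' : k * ℓ * (4 * k) ^ r ≤ S'.card := by
        have h1 : k * ℓ * ((4 * k) ^ r * (4 * k)) ≤ S.card := by rw [← hpow]; exact hsize
        have h2 : S.card < k * (S'.card + 1) := hvdeg
        have h6 : 1 * (1 * 1) ≤ k * (ℓ * (4 * k) ^ r) := Nat.mul_le_mul hk (Nat.mul_le_mul hℓ hx)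
        have h3 : k * (k * ℓ * (4 * k) ^ r) ≤ k * S'.card := by nlinarith [h6, hk, h1, h2]
        exact Nat.le_of_mul_le_mul_left h3 (by omega)
      apply ih S' (insert v A)
      · rw [Finset.card_insert_of_notMem hvA]; omega
      · rw [Finset.disjoint_insert_left]
        constructor
        · intro h
          exact G.irrefl (Finset.mem_filter.mp h).2
        · exact (hdisj.mono_right (Finset.filter_subset _ _))
      · intro a ha s hs
        rcases Finset.mem_insert.mp ha with rfl | ha'
        · exact (Finset.mem_filter.mp hs).2
        · exact hadj a ha' s (Finset.filter_subset _ _ hs)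
      · exact hsize'

theorem kll_free_indep_set {V : Type*} [Fintype V] [DecidableEq V]
    (G : SimpleGraph V) (ℓ k : ℕ) (hℓ : 1 ≤ ℓ) (hk : 1 ≤ k)
    (hfree : KllFree G ℓ) (hn : k * ℓ * (4 * k) ^ ℓ ≤ Fintype.card V) :
    ∃ I : Finset V, I.card = k ∧ ∀ a ∈ I, ∀ b ∈ I, a ≠ b → ¬ G.Adj a b := by
  classical
  exact kll_step G ℓ k hℓ hk hfree ℓ Finset.univ ∅ (by simp) (by simp)
    (by simp) (by simpa [Finset.card_univ] using hn)
end

section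
/- Let ℓ ≥ 3, let G be a K_{ℓ,ℓ}-free finite simple graph, and let C be a set of vertices of G with |C| ≥ (3ℓ)^{4ℓ}. Then the number of vertices v of G such that v is adjacent to at least |C|/(8ℓ) vertices of C is at most (3ℓ)^{2ℓ}. -/
open Finset

theorem Set.ncard_le_of_forall_finset_subset {α : Type*} {s : Set α} {n : ℕ}
    (h : ∀ t : Finset α, ↑t ⊆ s → #t ≤ n) : s.ncard ≤ n := by
  by_cases hs : s.Finite
  · simpa [Set.ncard_eq_toFinset_card s hs] using h hs.toFinset (by simp)
  · obtain ⟨t, hts, ht⟩ := Set.Infinite.exists_subset_card_eq hs (n + 1)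
    have := h t hts
    omega

theorem Nat.choose_le_pow_mul_choose {m k D ℓ : ℕ} (h : m ≤ k * (D + 1 - ℓ)) :
    m.choose ℓ ≤ k ^ ℓ * D.choose ℓ := by
  refine Nat.le_of_mul_le_mul_left ?_ ℓ.factorial_pos
  calc ℓ.factorial * m.choose ℓ = m.descFactorial ℓ :=
      (m.descFactorial_eq_factorial_mul_choose ℓ).symm
    _ ≤ m ^ ℓ := m.descFactorial_le_pow ℓ
    _ ≤ k ^ ℓ * (D + 1 - ℓ) ^ ℓ := by rw [← mul_pow]; exact Nat.pow_le_pow_left h ℓ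
    _ ≤ k ^ ℓ * D.descFactorial ℓ := Nat.mul_le_mul_left _ (D.pow_sub_le_descFactorial ℓ)
    _ = ℓ.factorial * (k ^ ℓ * D.choose ℓ) := by
      rw [D.descFactorial_eq_factorial_mul_choose]; ring

theorem Nat.le_mul_div_add_one_sub_of_sq_le {m ℓ : ℕ} (hℓ : 0 < ℓ) (hm : 72 * ℓ ^ 2 ≤ m) :
    m ≤ 9 * ℓ * (m / (8 * ℓ) + 1 - ℓ) := by
  set D := m / (8 * ℓ)
  have hmD : m < 8 * ℓ * (D + 1) := by
    rw [mul_comm]; exact Nat.lt_mul_of_div_lt (Nat.lt_succ_self D) (by positivity)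
  have hD : 9 * ℓ ≤ D + 1 := by
    by_contra! h
    have : 8 * ℓ * (D + 1) ≤ 8 * ℓ * (9 * ℓ) := Nat.mul_le_mul_left _ h.le
    nlinarith
  obtain ⟨E, hE⟩ : ∃ E, D + 1 = E + ℓ := ⟨D + 1 - ℓ, by omega⟩
  rw [hE, Nat.add_sub_cancel]
  rw [hE] at hmD hD
  nlinarith

section KllFree

variable {V : Type*} [DecidableEq V] {G : SimpleGraph V} {ℓ : ℕ}

theorem KllFree.pos_s4 (h : KllFree G ℓ) : 0 < ℓ :=
  Nat.pos_of_ne_zero fun hℓ => h ⟨∅, ∅, disjoint_empty_left _, by simp [hℓ], by simp [hℓ], by simp⟩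

theorem KllFree.card_lt_of_forall_adj (h : KllFree G ℓ) {A S : Finset V} (hS : #S = ℓ)
    (hAS : ∀ a ∈ A, ∀ s ∈ S, G.Adj a s) : #A < ℓ := by
  by_contra! hA
  obtain ⟨A', hA'A, hA'⟩ := exists_subset_card_eq hA
  refine h ⟨A', S, disjoint_left.2 fun a ha has => ?_, hA', hS, fun a ha => hAS a (hA'A ha)⟩
  exact G.loopless.irrefl a (hAS a (hA'A ha) a has)

theorem KllFree.card_mul_choose_le [DecidableRel G.Adj] (h : KllFree G ℓ) {H C : Finset V}
    {D : ℕ} (hD : ∀ v ∈ H, D ≤ #{c ∈ C | G.Adj v c}) :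
    #H * D.choose ℓ ≤ (#C).choose ℓ * (ℓ - 1) := by
  rw [← card_powersetCard]
  refine card_mul_le_card_mul (fun v S => S ⊆ {c ∈ C | G.Adj v c}) (fun v hv => ?_)
    (fun S hS => ?_)
  · calc D.choose ℓ ≤ (#{c ∈ C | G.Adj v c}).choose ℓ := Nat.choose_le_choose ℓ (hD v hv)
      _ = #(powersetCard ℓ {c ∈ C | G.Adj v c}) := (card_powersetCard _ _).symm
      _ ≤ _ := card_le_card fun S hS => by
        rw [mem_powersetCard] at hS
        exact (mem_bipartiteAbove _).2
          ⟨mem_powersetCard.2 ⟨hS.1.trans (filter_subset _ _), hS.2⟩, hS.1⟩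
  · refine Nat.le_sub_one_of_lt (h.card_lt_of_forall_adj (mem_powersetCard.1 hS).2 ?_)
    intro a ha s hs
    exact (mem_filter.1 (((mem_bipartiteBelow _).1 ha).2 hs)).2

end KllFree

theorem few_high_degree_into_class_general {V : Type*} [DecidableEq V]
    (G : SimpleGraph V) [DecidableRel G.Adj] (ℓ : ℕ)
    (hfree : KllFree G ℓ) (C : Finset V) (hC : (3 * ℓ) ^ (4 * ℓ) ≤ C.card) :
    {v : V | (C.card : ℝ) / (8 * ℓ) ≤ ((C.filter (fun c => G.Adj v c)).card : ℝ)}.ncard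
      ≤ (3 * ℓ) ^ (2 * ℓ) := by
  have hℓ := hfree.pos_s4
  set D := #C / (8 * ℓ)
  have hCℓ : 72 * ℓ ^ 2 ≤ #C := calc
    72 * ℓ ^ 2 ≤ (3 * ℓ) ^ 4 := by nlinarith [Nat.one_le_pow 2 ℓ hℓ]
    _ ≤ (3 * ℓ) ^ (4 * ℓ) := Nat.pow_le_pow_right (by omega) (by omega)
    _ ≤ #C := hC
  have hCD := Nat.le_mul_div_add_one_sub_of_sq_le hℓ hCℓ
  have hDℓ : ℓ ≤ D := by
    by_contra! h
    rw [show D + 1 - ℓ = 0 by omega] at hCD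
    nlinarith
  have hchoose : (#C).choose ℓ * (ℓ - 1) ≤ (3 * ℓ) ^ (2 * ℓ) * D.choose ℓ := calc
    (#C).choose ℓ * (ℓ - 1) ≤ (9 * ℓ) ^ ℓ * D.choose ℓ * ℓ ^ ℓ :=
      Nat.mul_le_mul (Nat.choose_le_pow_mul_choose hCD)
        ((Nat.sub_le ℓ 1).trans (Nat.le_self_pow hℓ.ne' ℓ))
    _ = (3 * ℓ) ^ (2 * ℓ) * D.choose ℓ := by rw [pow_mul]; ring
  refine Set.ncard_le_of_forall_finset_subset fun H hH => ?_
  have hdeg : ∀ v ∈ H, D ≤ #{c ∈ C | G.Adj v c} := fun v hv => by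
    have : (D : ℝ) ≤ #{c ∈ C | G.Adj v c} :=
      (Nat.cast_div_le.trans_eq (by push_cast; ring)).trans (hH hv)
    exact_mod_cast this
  exact Nat.le_of_mul_le_mul_right ((hfree.card_mul_choose_le hdeg).trans hchoose)
    (Nat.choose_pos hDℓ)

theorem few_high_degree_into_class {V : Type*} [Fintype V] [DecidableEq V]
    (G : SimpleGraph V) [DecidableRel G.Adj] (ℓ : ℕ) (hℓ : 3 ≤ ℓ)
    (hfree : KllFree G ℓ) (C : Finset V) (hC : (3 * ℓ) ^ (4 * ℓ) ≤ C.card) :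
    {v : V | (C.card : ℝ) / (8 * ℓ) ≤ ((C.filter (fun c => G.Adj v c)).card : ℝ)}.ncard
      ≤ (3 * ℓ) ^ (2 * ℓ) :=
  few_high_degree_into_class_general G ℓ hfree C hC
end

section
/- Let G be a finite simple graph, k ≥ 1, and let I and S be independent sets of G, each of size k. Suppose there is a vertex i₀ ∈ I such that every vertex of I ∖ {i₀} is not in S and is not adjacent to any vertex of S. Then I can be TJ-transformed into S. -/
/-- `I` is an independent set of `G`: its vertices are pairwise non-adjacent. -/
def IsIndep {V : Type*} (G : SimpleGraph V) (I : Finset V) : Prop :=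
  ∀ a ∈ I, ∀ b ∈ I, a ≠ b → ¬ G.Adj a b

/-- Two independent sets of size `k` are TJ-adjacent if the second is obtained from the
first by replacing one vertex `u ∈ I` by a vertex `v ∉ I`. -/
def TJStep {V : Type*} [DecidableEq V] (G : SimpleGraph V) (k : ℕ) (I J : Finset V) : Prop :=
  IsIndep G I ∧ IsIndep G J ∧ I.card = k ∧ J.card = k ∧
    ∃ u ∈ I, ∃ v, v ∉ I ∧ J = insert v (I.erase u)

/-- `I` can be TJ-transformed into `J`: there is a finite sequence of independent sets of
size `k`, starting at `I` and ending at `J`, in which consecutive sets are TJ-adjacent. -/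
def TJReach {V : Type*} [DecidableEq V] (G : SimpleGraph V) (k : ℕ) (I J : Finset V) : Prop :=
  Relation.ReflTransGen (TJStep G k) I J


/-!
Let `J` and `S` be independent sets of equal size such that no vertex of `J \ S` has a
neighbour in `S`. Then any vertex of `J \ S` can be swapped for any vertex of `S \ J`: the
incoming vertex has no neighbour in `S` (independence of `S`) nor in `J \ S`. The swap keeps
this property and shrinks `J \ S`, so `J` reaches `S`. Under the hypothesis of the theorem,
`I` has this property if `i₀ ∈ S`, and otherwise after swapping `i₀` for a vertex of `S`.
-/

open Finset

section

variable {V : Type*} [DecidableEq V] {G : SimpleGraph V}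

theorem IsIndep.insert_erase {J : Finset V} {v w : V} (hJ : IsIndep G J)
    (hv : ∀ b ∈ J.erase w, ¬ G.Adj v b) : IsIndep G (insert v (J.erase w)) := by
  intro a ha b hb hab
  rcases mem_insert.1 ha with rfl | ha'
  · rcases mem_insert.1 hb with rfl | hb'
    · exact absurd rfl hab
    · exact hv b hb'
  · rcases mem_insert.1 hb with rfl | hb'
    · exact fun h => hv a ha' h.symm
    · exact hJ a (mem_of_mem_erase ha') b (mem_of_mem_erase hb') hab

theorem tjStep_insert_erase {k : ℕ} {J : Finset V} {v w : V} (hJ : IsIndep G J)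
    (hJcard : J.card = k) (hw : w ∈ J) (hv : v ∉ J) (hvw : ∀ b ∈ J.erase w, ¬ G.Adj v b) :
    TJStep G k J (insert v (J.erase w)) := by
  have hcard : (insert v (J.erase w)).card = k := by
    rw [card_insert_of_notMem fun h => hv (mem_of_mem_erase h), card_erase_of_mem hw]
    have := card_pos.2 ⟨w, hw⟩
    omega
  exact ⟨hJ, hJ.insert_erase hvw, hJcard, hcard, w, hw, v, hv, rfl⟩

theorem tjReach_of_sdiff_anticomplete {k : ℕ} {J S : Finset V} (hJ : IsIndep G J)
    (hS : IsIndep G S) (hJcard : J.card = k) (hScard : S.card = k)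
    (hanti : ∀ w ∈ J \ S, ∀ s ∈ S, ¬ G.Adj w s) : TJReach G k J S := by
  induction h : (J \ S).card generalizing J with
  | zero =>
    have hJS : J ⊆ S := sdiff_eq_empty_iff_subset.1 (card_eq_zero.1 h)
    rw [eq_of_subset_of_card_le hJS (by omega)]
    exact .refl
  | succ n ih =>
    obtain ⟨w, hw⟩ : (J \ S).Nonempty := card_pos.1 (by omega)
    obtain ⟨s, hs⟩ : (S \ J).Nonempty :=
      card_pos.1 (by rw [card_sdiff_comm (hScard.trans hJcard.symm)]; omega)
    obtain ⟨hwJ, hwS⟩ := mem_sdiff.1 hw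
    obtain ⟨hsS, hsJ⟩ := mem_sdiff.1 hs
    have hs_nonadj : ∀ b ∈ J.erase w, ¬ G.Adj s b := by
      intro b hb
      by_cases hbS : b ∈ S
      · exact hS s hsS b hbS (by rintro rfl; exact hsJ (mem_of_mem_erase hb))
      · exact fun hsb => hanti b (mem_sdiff.2 ⟨mem_of_mem_erase hb, hbS⟩) s hsS hsb.symm
    have hstep := tjStep_insert_erase hJ hJcard hwJ hsJ hs_nonadj
    have hsdiff : insert s (J.erase w) \ S = (J \ S).erase w := by
      rw [insert_sdiff_of_mem _ hsS, erase_sdiff_comm]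
    refine .head hstep (ih hstep.2.1 hstep.2.2.2.1 ?_ ?_)
    · rw [hsdiff]
      exact fun x hx => hanti x (mem_of_mem_erase hx)
    · rw [hsdiff, card_erase_of_mem hw, h]
      rfl

end

theorem tj_transform_of_anticomplete_general {V : Type*} [DecidableEq V]
    (G : SimpleGraph V) (k : ℕ) (I S : Finset V)
    (hI : IsIndep G I) (hS : IsIndep G S) (hIcard : I.card = k) (hScard : S.card = k)
    (i₀ : V) (hi₀ : i₀ ∈ I)
    (hanticomplete : ∀ w ∈ I, w ≠ i₀ → w ∉ S ∧ ∀ s ∈ S, ¬ G.Adj w s) :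
    TJReach G k I S := by
  have hrest : ∀ w ∈ I.erase i₀, ∀ s ∈ S, ¬ G.Adj w s := fun w hw =>
    (hanticomplete w (mem_of_mem_erase hw) (ne_of_mem_erase hw)).2
  by_cases hi₀S : i₀ ∈ S
  · refine tjReach_of_sdiff_anticomplete hI hS hIcard hScard fun w hw => hrest w ?_
    obtain ⟨hwI, hwS⟩ := mem_sdiff.1 hw
    exact mem_erase.2 ⟨by rintro rfl; exact hwS hi₀S, hwI⟩
  · obtain ⟨s, hsS⟩ : S.Nonempty :=
      card_pos.1 (by rw [hScard, ← hIcard]; exact card_pos.2 ⟨i₀, hi₀⟩)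
    have hsI : s ∉ I := fun hsI =>
      if hsi₀ : s = i₀ then hi₀S (hsi₀ ▸ hsS) else (hanticomplete s hsI hsi₀).1 hsS
    have hstep := tjStep_insert_erase hI hIcard hi₀ hsI fun b hb hsb => hrest b hb s hsS hsb.symm
    refine .head hstep (tjReach_of_sdiff_anticomplete hstep.2.1 hS hstep.2.2.2.1 hScard ?_)
    intro w hw
    obtain ⟨hwI₁, hwS⟩ := mem_sdiff.1 hw
    exact hrest w ((mem_insert.1 hwI₁).resolve_left (by rintro rfl; exact hwS hsS))

theorem tj_transform_of_anticomplete {V : Type*} [Fintype V] [DecidableEq V]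
    (G : SimpleGraph V) (k : ℕ) (hk : 1 ≤ k) (I S : Finset V)
    (hI : IsIndep G I) (hS : IsIndep G S) (hIcard : I.card = k) (hScard : S.card = k)
    (i₀ : V) (hi₀ : i₀ ∈ I)
    (hanticomplete : ∀ w ∈ I, w ≠ i₀ → w ∉ S ∧ ∀ s ∈ S, ¬ G.Adj w s) :
    TJReach G k I S :=
  tj_transform_of_anticomplete_general G k I S hI hS hIcard hScard i₀ hi₀ hanticomplete
end

section
/- Let ℓ ≥ 1, k ≥ 1, let G be a K_{ℓ,ℓ}-free finite simple graph, and let I and J be independent sets of G of size k. Let X be a set of vertices with I ∪ J ⊆ X, and let C be a set of vertices disjoint from X with |C| ≥ k·ℓ·(4k)^ℓ such that there is a vertex x ∈ X for which no vertex of X ∖ {x} has a neighbor in C. Then I can be TJ-transformed into J. -/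
/-!
A graph with no `K_{ℓ,ℓ}` has an independent set of size `k` in any vertex set of size `ℓ k^ℓ`:
either some vertex has `ℓ k^{b-1}` neighbours there, and one recurses into its neighbourhood with
`K_{ℓ,b-1}` excluded, or all degrees are small and a greedy choice works. Take such an independent
set `D ⊆ C`. Apart from `x`, nothing in `X` sees `C`, so from `I` one first jumps `x` (if present)
into `D`; then `I ∖ {x}` and `D` lie in one independent set, inside which any two `k`-subsets are
TJ-connected by exchanging one vertex at a time. The same holds for `J`.
-/

open Finset

section

variable {V : Type*} {G : SimpleGraph V}

theorem isIndep_empty : IsIndep G ∅ := by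
  simp [IsIndep]

theorem IsIndep.mono {S U : Finset V} (hU : IsIndep G U) (hS : S ⊆ U) : IsIndep G S :=
  fun a ha b hb => hU a (hS ha) b (hS hb)

theorem IsIndep.insert_of_not_adj [DecidableEq V] {I : Finset V} {v : V} (hI : IsIndep G I)
    (hv : ∀ w ∈ I, ¬ G.Adj v w) : IsIndep G (insert v I) := by
  intro a ha b hb hab
  rw [mem_insert] at ha hb
  rcases ha with rfl | ha <;> rcases hb with rfl | hb
  · exact absurd rfl hab
  · exact hv b hb
  · exact fun h => hv a ha h.symm
  · exact hI a ha b hb hab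

theorem IsIndep.union [DecidableEq V] {S T : Finset V} (hS : IsIndep G S) (hT : IsIndep G T)
    (hST : ∀ a ∈ S, ∀ b ∈ T, ¬ G.Adj a b) : IsIndep G (S ∪ T) := by
  intro a ha b hb hab
  rcases mem_union.1 ha with ha | ha <;> rcases mem_union.1 hb with hb | hb
  · exact hS a ha b hb hab
  · exact hST a ha b hb
  · exact fun h => hST b hb a ha h.symm
  · exact hT a ha b hb hab

theorem exists_isIndep_of_degree_le [DecidableEq V] [DecidableRel G.Adj] {d : ℕ} :
    ∀ {k : ℕ} {C : Finset V}, (∀ v ∈ C, #{w ∈ C | G.Adj v w} ≤ d) → (d + 1) * k ≤ #C →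
      ∃ I ⊆ C, #I = k ∧ IsIndep G I
  | 0, _, _, _ => ⟨∅, empty_subset _, card_empty, isIndep_empty⟩
  | k + 1, C, hdeg, hC => by
    obtain ⟨v, hv⟩ : C.Nonempty := card_pos.1 (by rw [Nat.mul_succ] at hC; omega)
    set C' := {w ∈ C.erase v | ¬ G.Adj v w}
    have hC'C : C' ⊆ C := (filter_subset _ _).trans (erase_subset v C)
    have hC' : (d + 1) * k ≤ #C' := by
      have hsplit : #{w ∈ C.erase v | G.Adj v w} + #C' = #(C.erase v) :=
        card_filter_add_card_filter_not _
      have hN : #{w ∈ C.erase v | G.Adj v w} ≤ d :=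
        (card_le_card (filter_subset_filter _ (erase_subset v C))).trans (hdeg v hv)
      have := card_erase_add_one hv
      rw [Nat.mul_succ] at hC
      omega
    obtain ⟨I, hIC', hIk, hI⟩ := exists_isIndep_of_degree_le
      (fun w hw => (card_le_card (filter_subset_filter _ hC'C)).trans (hdeg w (hC'C hw))) hC'
    have hvI : v ∉ I := fun h => notMem_erase v C (mem_of_mem_filter v (hIC' h))
    refine ⟨insert v I, insert_subset hv (hIC'.trans hC'C), by rw [card_insert_of_notMem hvI, hIk],
      hI.insert_of_not_adj fun w hw => (mem_filter.1 (hIC' hw)).2⟩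

def CompleteBipartiteFreeOn (G : SimpleGraph V) (a b : ℕ) (C : Finset V) : Prop :=
  ¬ ∃ A ⊆ C, ∃ B ⊆ C, Disjoint A B ∧ #A = a ∧ #B = b ∧ ∀ p ∈ A, ∀ q ∈ B, G.Adj p q

theorem KllFree.completeBipartiteFreeOn [DecidableEq V] {ℓ : ℕ} (h : KllFree G ℓ)
    (C : Finset V) : CompleteBipartiteFreeOn G ℓ ℓ C :=
  fun ⟨A, _, B, _, hAB, hA, hB, hcomp⟩ => h ⟨A, B, hAB, hA, hB, hcomp⟩

theorem CompleteBipartiteFreeOn.neighborFinset [DecidableEq V] [DecidableRel G.Adj]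
    {a b : ℕ} {C : Finset V} {v : V} (h : CompleteBipartiteFreeOn G a (b + 1) C) (hv : v ∈ C) :
    CompleteBipartiteFreeOn G a b {w ∈ C | G.Adj v w} := by
  rintro ⟨A, hA, B, hB, hAB, hAa, hBb, hcomp⟩
  have hvN : v ∉ ({w ∈ C | G.Adj v w} : Finset V) := fun h => G.irrefl (mem_filter.1 h).2
  refine h ⟨A, hA.trans (filter_subset _ _), insert v B,
    insert_subset hv (hB.trans (filter_subset _ _)),
    disjoint_insert_right.2 ⟨fun h => hvN (hA h), hAB⟩, hAa,
    by rw [card_insert_of_notMem fun h => hvN (hB h), hBb], ?_⟩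
  intro p hp q hq
  rcases mem_insert.1 hq with rfl | hq
  · exact (mem_filter.1 (hA hp)).2.symm
  · exact hcomp p hp q hq

theorem CompleteBipartiteFreeOn.exists_isIndep {a b k : ℕ} {C : Finset V} (ha : 1 ≤ a)
    (hfree : CompleteBipartiteFreeOn G a b C) (hC : a * k ^ b ≤ #C) :
    ∃ I ⊆ C, #I = k ∧ IsIndep G I := by
  classical
  obtain rfl | hk := k.eq_zero_or_pos
  · exact ⟨∅, empty_subset _, card_empty, isIndep_empty⟩
  induction b generalizing C with
  | zero =>
    obtain ⟨A, hAC, hA⟩ := exists_subset_card_eq (by simpa using hC)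
    exact (hfree ⟨A, hAC, ∅, empty_subset _, disjoint_empty_right _, hA, card_empty,
      by simp⟩).elim
  | succ b ih =>
    by_cases hbig : ∃ v ∈ C, a * k ^ b ≤ #{w ∈ C | G.Adj v w}
    · obtain ⟨v, hv, hN⟩ := hbig
      obtain ⟨I, hIN, hIk, hI⟩ := ih (hfree.neighborFinset hv) hN
      exact ⟨I, hIN.trans (filter_subset _ _), hIk, hI⟩
    · push Not at hbig
      have hpos : 0 < a * k ^ b := by positivity
      refine exists_isIndep_of_degree_le (d := a * k ^ b - 1)
        (fun v hv => Nat.le_sub_one_of_lt (hbig v hv)) ?_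
      rwa [Nat.sub_add_cancel hpos, mul_assoc, ← pow_succ]

section Reconfiguration

variable [DecidableEq V] {k : ℕ}

theorem TJStep.symm {S T : Finset V} (h : TJStep G k S T) : TJStep G k T S := by
  obtain ⟨hS, hT, hSk, hTk, u, hu, v, hv, rfl⟩ := h
  refine ⟨hT, hS, hTk, hSk, v, mem_insert_self _ _, u, ?_, ?_⟩
  · rw [mem_insert, not_or]
    exact ⟨ne_of_mem_of_not_mem hu hv, notMem_erase u S⟩
  · rw [erase_insert fun h => hv (mem_of_mem_erase h), insert_erase hu]

instance : Std.Symm (TJStep G k) := ⟨fun _ _ => TJStep.symm⟩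

theorem IsIndep.tjReach_of_subset {U S T : Finset V} (hU : IsIndep G U) (hSU : S ⊆ U)
    (hTU : T ⊆ U) (hSk : #S = k) (hTk : #T = k) : TJReach G k S T := by
  induction hn : #(S \ T) generalizing S with
  | zero =>
    rw [card_eq_zero, sdiff_eq_empty_iff_subset] at hn
    rw [eq_of_subset_of_card_le hn (by omega)]
    exact .refl
  | succ n ih =>
    obtain ⟨a, ha⟩ : (S \ T).Nonempty := card_pos.1 (by omega)
    obtain ⟨b, hb⟩ : (T \ S).Nonempty := card_pos.1 (by rw [← card_sdiff_comm (by omega)]; omega)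
    rw [mem_sdiff] at ha hb
    have hS'U : insert b (S.erase a) ⊆ U := insert_subset (hTU hb.1) ((erase_subset a S).trans hSU)
    have hS'k : #(insert b (S.erase a)) = k := by
      rw [card_insert_of_notMem fun h => hb.2 (mem_of_mem_erase h), card_erase_add_one ha.1, hSk]
    have hS'n : #(insert b (S.erase a) \ T) = n := by
      rw [insert_sdiff_of_mem _ hb.1, erase_sdiff_comm, card_erase_of_mem (mem_sdiff.2 ha)]
      omega
    exact .head ⟨hU.mono hSU, hU.mono hS'U, hSk, hS'k, a, ha.1, b, hb.2, rfl⟩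
      (ih hS'U hS'k hS'n)

theorem IsIndep.tjReach_of_ne_not_adj {K D : Finset V} {x : V} (hK : IsIndep G K) (hKk : #K = k)
    (hD : IsIndep G D) (hDk : #D = k) (hKD : Disjoint K D)
    (hcross : ∀ a ∈ K, a ≠ x → ∀ b ∈ D, ¬ G.Adj a b) : TJReach G k K D := by
  have hU : IsIndep G (K.erase x ∪ D) := (hK.mono (erase_subset x K)).union hD
    fun a ha b hb => hcross a (mem_of_mem_erase ha) (ne_of_mem_erase ha) b hb
  by_cases hxK : x ∈ K
  · obtain ⟨d, hd⟩ : D.Nonempty := card_pos.1 (hDk ▸ hKk ▸ card_pos.2 ⟨x, hxK⟩)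
    have hdK : d ∉ K := disjoint_right.1 hKD hd
    have hK'U : insert d (K.erase x) ⊆ K.erase x ∪ D :=
      insert_subset (mem_union_right _ hd) subset_union_left
    have hK'k : #(insert d (K.erase x)) = k := by
      rw [card_insert_of_notMem fun h => hdK (mem_of_mem_erase h), card_erase_add_one hxK, hKk]
    exact .head ⟨hK, hU.mono hK'U, hKk, hK'k, x, hxK, d, hdK, rfl⟩
      (hU.tjReach_of_subset hK'U subset_union_right hK'k hDk)
  · exact hU.tjReach_of_subset (by rw [erase_eq_of_notMem hxK]; exact subset_union_left)
      subset_union_right hKk hDk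

end Reconfiguration

end

theorem big_class_of_rank_le_one_general {V : Type*} [DecidableEq V]
    (G : SimpleGraph V) (ℓ k : ℕ) (hℓ : 1 ≤ ℓ) (hfree : KllFree G ℓ)
    (I J : Finset V) (hI : IsIndep G I) (hJ : IsIndep G J)
    (hIcard : I.card = k) (hJcard : J.card = k)
    (X C : Finset V) (hIJX : I ∪ J ⊆ X) (hCX : Disjoint C X)
    (hCcard : k * ℓ * (4 * k) ^ ℓ ≤ C.card)
    (x : V)
    (hrank : ∀ y ∈ X, y ≠ x → ∀ c ∈ C, ¬ G.Adj y c) :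
    TJReach G k I J := by
  have hsize : ℓ * k ^ ℓ ≤ #C := by
    refine le_trans ?_ hCcard
    rcases k.eq_zero_or_pos with rfl | hk
    · simp [zero_pow (by omega : ℓ ≠ 0)]
    · calc ℓ * k ^ ℓ ≤ ℓ * (4 * k) ^ ℓ := by gcongr; omega
        _ ≤ k * (ℓ * (4 * k) ^ ℓ) := Nat.le_mul_of_pos_left _ hk
        _ = k * ℓ * (4 * k) ^ ℓ := by ring
  obtain ⟨D, hDC, hDk, hD⟩ := (hfree.completeBipartiteFreeOn C).exists_isIndep hℓ hsize
  have reach : ∀ K ⊆ X, IsIndep G K → #K = k → TJReach G k K D := fun K hKX hK hKk =>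
    hK.tjReach_of_ne_not_adj hKk hD hDk ((hCX.symm.mono_left hKX).mono_right hDC)
      fun a ha hax b hb => hrank a (hKX ha) hax b (hDC hb)
  exact (reach I (subset_union_left.trans hIJX) hI hIcard).trans
    (symm (reach J (subset_union_right.trans hIJX) hJ hJcard))

theorem big_class_of_rank_le_one {V : Type*} [Fintype V] [DecidableEq V]
    (G : SimpleGraph V) (ℓ k : ℕ) (hℓ : 1 ≤ ℓ) (hk : 1 ≤ k) (hfree : KllFree G ℓ)
    (I J : Finset V) (hI : IsIndep G I) (hJ : IsIndep G J)
    (hIcard : I.card = k) (hJcard : J.card = k)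
    (X C : Finset V) (hIJX : I ∪ J ⊆ X) (hCX : Disjoint C X)
    (hCcard : k * ℓ * (4 * k) ^ ℓ ≤ C.card)
    (x : V) (hx : x ∈ X)
    (hrank : ∀ y ∈ X, y ≠ x → ∀ c ∈ C, ¬ G.Adj y c) :
    TJReach G k I J :=
  big_class_of_rank_le_one_general G ℓ k hℓ hfree I J hI hJ hIcard hJcard X C hIJX hCX hCcard x
    hrank
end

section
/- Let G be a finite simple graph of VC-dimension at most 1, and let u and v be distinct vertices with N[u] ⊆ N[v]. Let k ≥ 1 and let I and J be independent sets of G of size k with v ∉ I and v ∉ J. Then I can be TJ-transformed into J in G if and only if I can be TJ-transformed into J in the induced subgraph of G obtained by deleting v (equivalently, via a sequence of independent sets of size k none of which contains v). -/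
/-- The closed neighborhood of a vertex: the vertex together with its neighbors. -/
def closedNbhd {V : Type*} (G : SimpleGraph V) (v : V) : Set V :=
  insert v (G.neighborSet v)

/-- `G` has VC-dimension at most 1 (w.r.t. closed neighborhoods): no pair of distinct
vertices is shattered by closed neighborhoods. -/
def VCdimLEOne {V : Type*} (G : SimpleGraph V) : Prop :=
  ∀ u v : V, u ≠ v →
    ¬ ∀ T ⊆ ({u, v} : Set V), ∃ w : V, closedNbhd G w ∩ {u, v} = T

/-!
Since `N[u] ⊆ N[v]` and `u ≠ v`, the vertex `u` is a neighbour of `v`, and every vertex other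
than `v` adjacent to `u` is adjacent to `v`. Hence replacing `v` by `u` sends independent sets
of size `k` to independent sets of size `k` avoiding `v`, fixes those already avoiding `v`, and
moves at most one vertex of a TJ-step. Applying it to every set of a TJ-sequence from `I` to `J`
yields a TJ-sequence avoiding `v`, after dropping repetitions.
-/

section

variable {V : Type*}

lemma adj_of_mem_closedNbhd {G : SimpleGraph V} {v a : V} (ha : a ∈ closedNbhd G v)
    (hav : a ≠ v) : G.Adj v a :=
  (Set.mem_insert_iff.1 ha).resolve_left hav

variable [DecidableEq V] {G : SimpleGraph V} {k : ℕ}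

lemma Finset.exists_eq_insert_erase_of_card_sdiff_eq_one {A B : Finset V}
    (hcard : A.card = B.card) (hAB : (A \ B).card = 1) :
    ∃ x ∈ A, ∃ w ∉ A, B = insert w (A.erase x) := by
  obtain ⟨x, hx⟩ := Finset.card_eq_one.1 hAB
  obtain ⟨w, hw⟩ := Finset.card_eq_one.1 ((Finset.card_sdiff_comm hcard).symm.trans hAB)
  have hxA := Finset.ext_iff.1 hx
  have hwB := Finset.ext_iff.1 hw
  simp only [Finset.mem_sdiff, Finset.mem_singleton] at hxA hwB
  refine ⟨x, ((hxA x).2 rfl).1, w, ((hwB w).2 rfl).2, Finset.ext fun a => ?_⟩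
  have := hxA a
  have := hwB a
  simp only [Finset.mem_insert, Finset.mem_erase]
  grind

lemma TJStep.card_sdiff_le_one {A B : Finset V} (h : TJStep G k A B) : (A \ B).card ≤ 1 := by
  obtain ⟨-, -, -, -, x, -, w, -, rfl⟩ := h
  refine (Finset.card_le_card fun a ha => ?_).trans (Finset.card_singleton x).le
  simp only [Finset.mem_sdiff, Finset.mem_insert, Finset.mem_erase, not_or] at ha
  exact Finset.mem_singleton.2 (not_not.1 fun hax => ha.2.2 ⟨hax, ha.1⟩)

lemma tjStep_of_card_sdiff_le_one {A B : Finset V} (hA : IsIndep G A) (hB : IsIndep G B)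
    (hAk : A.card = k) (hBk : B.card = k) (hAB : (A \ B).card ≤ 1) (hne : A ≠ B) :
    TJStep G k A B := by
  have hcard : (A \ B).card = 1 := by
    refine le_antisymm hAB (Finset.card_pos.2 (Finset.nonempty_iff_ne_empty.2 fun h => hne ?_))
    exact Finset.eq_of_subset_of_card_le (Finset.sdiff_eq_empty_iff_subset.1 h) (by omega)
  exact ⟨hA, hB, hAk, hBk, Finset.exists_eq_insert_erase_of_card_sdiff_eq_one (by omega) hcard⟩

def redirect (v u a : V) : V := if a = v then u else a

variable {u v : V}

lemma redirect_ne (huv : u ≠ v) (a : V) : redirect v u a ≠ v := by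
  unfold redirect; split_ifs with h <;> simp [h, huv]

lemma notMem_image_redirect (huv : u ≠ v) (A : Finset V) : v ∉ A.image (redirect v u) :=
  fun hv => (Finset.mem_image.1 hv).elim fun a ha => redirect_ne huv a ha.2

lemma image_redirect_of_notMem {A : Finset V} (hv : v ∉ A) : A.image (redirect v u) = A := by
  conv_rhs => rw [← Finset.image_id (s := A)]
  exact Finset.image_congr fun a ha => if_neg (ne_of_mem_of_not_mem ha hv)

lemma IsIndep.image_redirect (hsub : closedNbhd G u ⊆ closedNbhd G v)
    {A : Finset V} (hA : IsIndep G A) : IsIndep G (A.image (redirect v u)) := by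
  have hdom : ∀ a, a ≠ v → G.Adj u a → G.Adj v a := fun a hav hua =>
    adj_of_mem_closedNbhd (hsub (Set.mem_insert_of_mem _ hua)) hav
  simp only [IsIndep, Finset.mem_image, forall_exists_index, and_imp]
  rintro _ a ha rfl _ b hb rfl hne hadj
  unfold redirect at hne hadj
  split_ifs at hne hadj with hav hbv hbv'
  · exact hne rfl
  · exact hA a ha b hb (fun h => hbv (h ▸ hav)) (hav ▸ hdom b hbv hadj)
  · exact hA a ha b hb (fun h => hav (h.trans hbv')) (hbv' ▸ (hdom a hav hadj.symm).symm)
  · exact hA a ha b hb hne hadj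

lemma IsIndep.card_image_redirect (hvu : G.Adj v u) {A : Finset V} (hA : IsIndep G A) :
    (A.image (redirect v u)).card = A.card := by
  refine Finset.card_image_of_injOn fun a ha b hb hab => ?_
  by_contra hne
  unfold redirect at hab
  split_ifs at hab with hav hbv hbv
  · exact hne (hav.trans hbv.symm)
  · exact hA a ha b hb hne (hav ▸ hab ▸ hvu)
  · exact hA a ha b hb hne (hbv ▸ hab ▸ hvu.symm)
  · exact hne hab

lemma image_redirect_sdiff_subset (A B : Finset V) :
    A.image (redirect v u) \ B.image (redirect v u) ⊆ (A \ B).image (redirect v u) := by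
  refine sdiff_le_iff.2 ?_
  rw [Finset.sup_eq_union, ← Finset.image_union, Finset.union_sdiff_self_eq_union]
  exact Finset.image_subset_image Finset.subset_union_right

lemma TJStep.reflTransGen_image_redirect (hsub : closedNbhd G u ⊆ closedNbhd G v) (huv : u ≠ v)
    {A B : Finset V} (h : TJStep G k A B) :
    Relation.ReflTransGen (fun A B => TJStep G k A B ∧ v ∉ A ∧ v ∉ B)
      (A.image (redirect v u)) (B.image (redirect v u)) := by
  have hvu : G.Adj v u := adj_of_mem_closedNbhd (hsub (Set.mem_insert u _)) huv
  have hAB := h.card_sdiff_le_one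
  obtain ⟨hA, hB, hAk, hBk, -⟩ := h
  by_cases heq : A.image (redirect v u) = B.image (redirect v u)
  · exact heq ▸ Relation.ReflTransGen.refl
  have hsdiff : (A.image (redirect v u) \ B.image (redirect v u)).card ≤ 1 :=
    calc _ ≤ ((A \ B).image (redirect v u)).card :=
          Finset.card_le_card (image_redirect_sdiff_subset A B)
      _ ≤ (A \ B).card := Finset.card_image_le
      _ ≤ 1 := hAB
  refine .single ⟨tjStep_of_card_sdiff_le_one (hA.image_redirect hsub)
    (hB.image_redirect hsub) ((hA.card_image_redirect hvu).trans hAk)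
    ((hB.card_image_redirect hvu).trans hBk) hsdiff heq,
    notMem_image_redirect huv A, notMem_image_redirect huv B⟩

end

theorem tj_reach_delete_dominated_vertex_general {V : Type*} [DecidableEq V]
    (G : SimpleGraph V) (u v : V) (huv : u ≠ v)
    (hsub : closedNbhd G u ⊆ closedNbhd G v)
    (k : ℕ) (I J : Finset V)
    (hIv : v ∉ I) (hJv : v ∉ J) :
    TJReach G k I J ↔
      Relation.ReflTransGen (fun A B => TJStep G k A B ∧ v ∉ A ∧ v ∉ B) I J := by
  refine ⟨fun h => ?_, fun h => Relation.ReflTransGen.mono (fun _ _ hAB => hAB.1) _ _ h⟩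
  have := Relation.ReflTransGen.lift' (fun A => A.image (redirect v u))
    (fun _ _ hAB => hAB.reflTransGen_image_redirect hsub huv) _ _ h
  simpa only [Function.onFun, image_redirect_of_notMem hIv, image_redirect_of_notMem hJv]
    using this

theorem tj_reach_delete_dominated_vertex {V : Type*} [Fintype V] [DecidableEq V]
    (G : SimpleGraph V) (hVC : VCdimLEOne G) (u v : V) (huv : u ≠ v)
    (hsub : closedNbhd G u ⊆ closedNbhd G v)
    (k : ℕ) (hk : 1 ≤ k) (I J : Finset V)
    (hI : IsIndep G I) (hJ : IsIndep G J) (hIcard : I.card = k) (hJcard : J.card = k)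
    (hIv : v ∉ I) (hJv : v ∉ J) :
    TJReach G k I J ↔
      Relation.ReflTransGen (fun A B => TJStep G k A B ∧ v ∉ A ∧ v ∉ B) I J :=
  tj_reach_delete_dominated_vertex_general G u v huv hsub k I J hIv hJv
end

section
/- Let G be a finite simple graph of VC-dimension at most 1 such that for every two distinct vertices u and v, N[u] is not contained in N[v]. Let I and J be independent sets of G, each of size at least 3. Then I ∪ J is an independent set of G. -/
lemma mem_closedNbhd {V : Type*} (G : SimpleGraph V) (x w : V) :
    x ∈ closedNbhd G w ↔ x = w ∨ G.Adj w x := by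
  simp [closedNbhd]

lemma closedNbhd_comm {V : Type*} (G : SimpleGraph V) (x w : V) :
    x ∈ closedNbhd G w ↔ w ∈ closedNbhd G x := by
  simp only [mem_closedNbhd]
  constructor
  · rintro (rfl | h)
    · exact Or.inl rfl
    · exact Or.inr h.symm
  · rintro (rfl | h)
    · exact Or.inl rfl
    · exact Or.inr h.symm

/-- If the pair `{a,b}` has witnesses for `{a,b}`, `{a}`, `{b}`, then by non-shattering
every vertex's closed neighborhood meets `{a,b}`. -/
lemma cover_of_witnesses {V : Type*} (G : SimpleGraph V) (hVC : VCdimLEOne G)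
    (a b : V) (hab : a ≠ b)
    (h1 : ∃ w, a ∈ closedNbhd G w ∧ b ∈ closedNbhd G w)
    (h2 : ∃ w, a ∈ closedNbhd G w ∧ b ∉ closedNbhd G w)
    (h3 : ∃ w, a ∉ closedNbhd G w ∧ b ∈ closedNbhd G w) :
    ∀ w : V, a ∈ closedNbhd G w ∨ b ∈ closedNbhd G w := by
  have h := hVC a b hab
  push_neg at h
  obtain ⟨T, hTsub, hT⟩ := h
  by_cases haT : a ∈ T
  · by_cases hbT : b ∈ T
    · exfalso
      obtain ⟨w, hwa, hwb⟩ := h1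
      refine hT w ?_
      have hTeq : T = ({a, b} : Set V) := by
        apply Set.Subset.antisymm hTsub
        rintro x (rfl | rfl)
        · exact haT
        · exact hbT
      rw [hTeq]
      ext x
      constructor
      · exact fun h => h.2
      · rintro (rfl | rfl)
        · exact ⟨hwa, Or.inl rfl⟩
        · exact ⟨hwb, Or.inr rfl⟩
    · exfalso
      obtain ⟨w, hwa, hwb⟩ := h2
      refine hT w ?_
      have hTeq : T = ({a} : Set V) := by
        apply Set.Subset.antisymm
        · intro x hx
          rcases hTsub hx with rfl | rfl
          · exact rfl
          · exact absurd hx hbT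
        · rintro x rfl; exact haT
      rw [hTeq]
      ext x
      constructor
      · rintro ⟨hxw, (rfl | rfl)⟩
        · rfl
        · exact absurd hxw hwb
      · rintro rfl; exact ⟨hwa, Or.inl rfl⟩
  · by_cases hbT : b ∈ T
    · exfalso
      obtain ⟨w, hwa, hwb⟩ := h3
      refine hT w ?_
      have hTeq : T = ({b} : Set V) := by
        apply Set.Subset.antisymm
        · intro x hx
          rcases hTsub hx with rfl | rfl
          · exact absurd hx haT
          · exact rfl
        · rintro x rfl; exact hbT
      rw [hTeq]
      ext x
      constructor
      · rintro ⟨hxw, (rfl | rfl)⟩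
        · exact absurd hxw hwa
        · rfl
      · rintro rfl; exact ⟨hwb, Or.inr rfl⟩
    · have hTeq : T = (∅ : Set V) := by
        apply Set.eq_empty_of_subset_empty
        intro x hx
        rcases hTsub hx with rfl | rfl
        · exact absurd hx haT
        · exact absurd hx hbT
      intro w
      have hw := hT w
      rw [hTeq] at hw
      rcases Set.nonempty_iff_ne_empty.mpr hw with ⟨x, hx1, hx2⟩
      rcases hx2 with rfl | rfl
      · exact Or.inl hx1
      · exact Or.inr hx1

/-- Core argument: an element of a large independent set cannot be adjacent to a
vertex outside it. -/
lemma core {V : Type*} [DecidableEq V] (G : SimpleGraph V) (hVC : VCdimLEOne G)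
    (hnoincl : ∀ u v : V, u ≠ v → ¬ closedNbhd G u ⊆ closedNbhd G v)
    (I : Finset V) (hI : IsIndep G I) (hIcard : 3 ≤ I.card)
    (a b : V) (ha : a ∈ I) (hb : b ∉ I) (hadj : G.Adj a b) : False := by
  have hab : a ≠ b := G.ne_of_adj hadj
  -- every vertex is dominated by a or b
  have hcov : ∀ w : V, a ∈ closedNbhd G w ∨ b ∈ closedNbhd G w := by
    apply cover_of_witnesses G hVC a b hab
    · exact ⟨b, (mem_closedNbhd G a b).mpr (Or.inr hadj.symm),
        (mem_closedNbhd G b b).mpr (Or.inl rfl)⟩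
    · obtain ⟨x, hx1, hx2⟩ := Set.not_subset.mp (hnoincl a b hab)
      exact ⟨x, (closedNbhd_comm G x a).mp hx1,
        fun h => hx2 ((closedNbhd_comm G x b).mpr h)⟩
    · obtain ⟨x, hx1, hx2⟩ := Set.not_subset.mp (hnoincl b a hab.symm)
      exact ⟨x, fun h => hx2 ((closedNbhd_comm G x a).mpr h),
        (closedNbhd_comm G x b).mp hx1⟩
  -- I ⊆ N[b]
  have hIb : ∀ p ∈ I, p ∈ closedNbhd G b := by
    intro p hp
    rcases eq_or_ne p a with rfl | hpa
    · exact (mem_closedNbhd G p b).mpr (Or.inr hadj.symm)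
    · rcases hcov p with h | h
      · exfalso
        rcases (mem_closedNbhd G a p).mp h with rfl | h'
        · exact hpa rfl
        · exact hI a ha p hp hpa.symm h'.symm
      · exact (closedNbhd_comm G b p).mp h
  -- pick two distinct elements of I \ {a}
  have hcard2 : 1 < (I.erase a).card := by
    have := Finset.card_erase_of_mem ha
    omega
  obtain ⟨q, hq, r, hr, hqr⟩ := Finset.one_lt_card.mp hcard2
  have hqI : q ∈ I := Finset.mem_of_mem_erase hq
  have hrI : r ∈ I := Finset.mem_of_mem_erase hr
  have hqa : q ≠ a := Finset.ne_of_mem_erase hq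
  have hra : r ≠ a := Finset.ne_of_mem_erase hr
  -- every vertex is dominated by q or r
  have hcov2 : ∀ w : V, q ∈ closedNbhd G w ∨ r ∈ closedNbhd G w := by
    apply cover_of_witnesses G hVC q r hqr
    · exact ⟨b, hIb q hqI, hIb r hrI⟩
    · refine ⟨q, (mem_closedNbhd G q q).mpr (Or.inl rfl), fun h => ?_⟩
      rcases (mem_closedNbhd G r q).mp h with rfl | h'
      · exact hqr rfl
      · exact hI q hqI r hrI hqr h'
    · refine ⟨r, fun h => ?_, (mem_closedNbhd G r r).mpr (Or.inl rfl)⟩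
      rcases (mem_closedNbhd G q r).mp h with rfl | h'
      · exact hqr rfl
      · exact hI r hrI q hqI hqr.symm h'
  -- but a is dominated by neither q nor r
  rcases hcov2 a with h | h
  · rcases (mem_closedNbhd G q a).mp h with rfl | h'
    · exact hqa rfl
    · exact hI a ha q hqI (fun e => hqa e.symm) h'
  · rcases (mem_closedNbhd G r a).mp h with rfl | h'
    · exact hra rfl
    · exact hI a ha r hrI (fun e => hra e.symm) h'

theorem union_indep_of_vc_one {V : Type*} [Fintype V] [DecidableEq V]
    (G : SimpleGraph V) (hVC : VCdimLEOne G)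
    (hnoincl : ∀ u v : V, u ≠ v → ¬ closedNbhd G u ⊆ closedNbhd G v)
    (I J : Finset V) (hI : IsIndep G I) (hJ : IsIndep G J)
    (hIcard : 3 ≤ I.card) (hJcard : 3 ≤ J.card) :
    IsIndep G (I ∪ J) := by
  intro a ha b hb hne hadj
  by_cases haI : a ∈ I
  · by_cases hbI : b ∈ I
    · exact hI a haI b hbI hne hadj
    · exact core G hVC hnoincl I hI hIcard a b haI hbI hadj
  · have haJ : a ∈ J := (Finset.mem_union.mp ha).resolve_left haI
    by_cases hbJ : b ∈ J
    · exact hJ a haJ b hbJ hne hadj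
    · exact core G hVC hnoincl J hJ hJcard a b haJ hbJ hadj
end

section
/- Let G be a finite simple graph of VC-dimension at most 1 such that for every two distinct vertices u and v, N[u] is not contained in N[v]. Let k ≥ 3 and let I and J be independent sets of G of size k. Then I can be TJ-transformed into J. -/
lemma mem_closedNbhd_iff {V : Type*} (G : SimpleGraph V) {u w : V} :
    w ∈ closedNbhd G u ↔ w = u ∨ G.Adj u w := by
  simp [closedNbhd]

lemma mem_closedNbhd_comm {V : Type*} (G : SimpleGraph V) {u w : V} :
    w ∈ closedNbhd G u ↔ u ∈ closedNbhd G w := by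
  simp only [mem_closedNbhd_iff]
  constructor
  · rintro (rfl | h)
    · exact Or.inl rfl
    · exact Or.inr h.symm
  · rintro (rfl | h)
    · exact Or.inl rfl
    · exact Or.inr h.symm

lemma nbhd_disj {V : Type*} [DecidableEq V] (G : SimpleGraph V) (hVC : VCdimLEOne G)
    (hnoincl : ∀ u v : V, u ≠ v → ¬ closedNbhd G u ⊆ closedNbhd G v)
    (I : Finset V) (hI : IsIndep G I) (hcard : 3 ≤ I.card)
    {a b : V} (ha : a ∈ I) (hb : b ∈ I) (hab : a ≠ b)
    {w : V} (hwa : w ∈ closedNbhd G a) (hwb : w ∈ closedNbhd G b) : False := by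
  -- third vertex c
  have hbe : b ∈ I.erase a := Finset.mem_erase.mpr ⟨hab.symm, hb⟩
  have hcc : 1 ≤ ((I.erase a).erase b).card := by
    rw [Finset.card_erase_of_mem hbe, Finset.card_erase_of_mem ha]
    omega
  obtain ⟨c, hc⟩ := Finset.card_pos.mp hcc
  obtain ⟨hcb, hca, hcI⟩ : c ≠ b ∧ c ≠ a ∧ c ∈ I := by
    simpa [Finset.mem_erase] using hc
  -- witnesses
  obtain ⟨w1, hw1a, hw1b⟩ : ∃ w1, w1 ∈ closedNbhd G a ∧ w1 ∉ closedNbhd G b := by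
    have := hnoincl a b hab
    rw [Set.not_subset] at this
    exact this
  obtain ⟨w2, hw2b, hw2a⟩ : ∃ w2, w2 ∈ closedNbhd G b ∧ w2 ∉ closedNbhd G a := by
    have := hnoincl b a hab.symm
    rw [Set.not_subset] at this
    exact this
  have hac : a ∉ closedNbhd G c := by
    rw [mem_closedNbhd_iff]
    rintro (rfl | h)
    · exact hca rfl
    · exact hI c hcI a ha hca h
  have hbc : b ∉ closedNbhd G c := by
    rw [mem_closedNbhd_iff]
    rintro (rfl | h)
    · exact hcb rfl
    · exact hI c hcI b hb hcb h
  apply hVC a b hab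
  intro T hT
  have key : ∃ z : V, (a ∈ closedNbhd G z ↔ a ∈ T) ∧ (b ∈ closedNbhd G z ↔ b ∈ T) := by
    by_cases haT : a ∈ T <;> by_cases hbT : b ∈ T
    · exact ⟨w, by simp [haT, hbT, (mem_closedNbhd_comm G).mp hwa,
        (mem_closedNbhd_comm G).mp hwb]⟩
    · refine ⟨w1, by simp [haT, (mem_closedNbhd_comm G).mp hw1a], ?_⟩
      simp only [hbT, iff_false]
      rw [← mem_closedNbhd_comm]
      exact hw1b
    · refine ⟨w2, ?_, by simp [hbT, (mem_closedNbhd_comm G).mp hw2b]⟩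
      simp only [haT, iff_false]
      rw [← mem_closedNbhd_comm]
      exact hw2a
    · refine ⟨c, ?_, ?_⟩
      · simp only [haT, iff_false]; exact hac
      · simp only [hbT, iff_false]; exact hbc
  obtain ⟨z, hza, hzb⟩ := key
  refine ⟨z, ?_⟩
  ext x
  constructor
  · rintro ⟨hxz, hx⟩
    rcases hx with rfl | rfl
    · exact hza.mp hxz
    · exact hzb.mp hxz
  · intro hxT
    have hx : x ∈ ({a, b} : Set V) := hT hxT
    refine ⟨?_, hx⟩
    rcases hx with rfl | rfl
    · exact hza.mpr hxT
    · exact hzb.mpr hxT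

lemma tj_aux {V : Type*} [Fintype V] [DecidableEq V]
    (G : SimpleGraph V) (hVC : VCdimLEOne G)
    (hnoincl : ∀ u v : V, u ≠ v → ¬ closedNbhd G u ⊆ closedNbhd G v)
    (k : ℕ) (hk : 3 ≤ k) (J : Finset V) (hJ : IsIndep G J) (hJcard : J.card = k)
    (n : ℕ) : ∀ I : Finset V, IsIndep G I → I.card = k → (I \ J).card ≤ n →
    TJReach G k I J := by
  induction n with
  | zero =>
    intro I hI hIcard hn
    have hsub : I ⊆ J := by
      intro x hx
      by_contra hxJ
      have : x ∈ I \ J := Finset.mem_sdiff.mpr ⟨hx, hxJ⟩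
      have := Finset.card_pos.mpr ⟨x, this⟩
      omega
    have : I = J := Finset.eq_of_subset_of_card_le hsub (by omega)
    rw [this]; exact Relation.ReflTransGen.refl
  | succ n ih =>
    intro I hI hIcard hn
    by_cases hIJ : I = J
    · rw [hIJ]; exact Relation.ReflTransGen.refl
    have hIsd : (I \ J).Nonempty := by
      rw [Finset.sdiff_nonempty]
      intro hsub
      exact hIJ (Finset.eq_of_subset_of_card_le hsub (by omega))
    have hcards : (I \ J).card = (J \ I).card := Finset.card_sdiff_comm (by omega)
    have hJsd : (J \ I).Nonempty := by
      rw [← Finset.card_pos, ← hcards, Finset.card_pos]; exact hIsd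
    obtain ⟨y, hy⟩ := hJsd
    obtain ⟨hyJ, hyI⟩ := Finset.mem_sdiff.mp hy
    -- choose x ∈ I \ J such that no other vertex of I is adjacent to y
    have hx : ∃ x ∈ I \ J, ∀ a ∈ I, a ≠ x → ¬ G.Adj a y := by
      by_cases hA : ∃ a ∈ I, G.Adj a y
      · obtain ⟨a, haI, hadj⟩ := hA
        have haJ : a ∉ J := by
          intro haJ
          exact hJ a haJ y hyJ (G.ne_of_adj hadj) hadj
        refine ⟨a, Finset.mem_sdiff.mpr ⟨haI, haJ⟩, ?_⟩
        intro b hbI hba hbadj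
        exact nbhd_disj G hVC hnoincl I hI (by omega) hbI haI hba
          ((mem_closedNbhd_iff G).mpr (Or.inr hbadj))
          ((mem_closedNbhd_iff G).mpr (Or.inr hadj))
      · push_neg at hA
        obtain ⟨x, hx⟩ := hIsd
        exact ⟨x, hx, fun a haI _ => hA a haI⟩
    obtain ⟨x, hxIJ, hxprop⟩ := hx
    obtain ⟨hxI, hxJ⟩ := Finset.mem_sdiff.mp hxIJ
    set I' := insert y (I.erase x) with hI'def
    have hyX : y ∉ I.erase x := fun h => hyI (Finset.mem_of_mem_erase h)
    have hI'card : I'.card = k := by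
      rw [hI'def, Finset.card_insert_of_notMem hyX, Finset.card_erase_of_mem hxI]
      omega
    have hI'indep : IsIndep G I' := by
      intro p hp q hq hpq
      rw [hI'def, Finset.mem_insert] at hp hq
      rcases hp with rfl | hp <;> rcases hq with rfl | hq
      · exact absurd rfl hpq
      · obtain ⟨hqx, hqI⟩ := Finset.mem_erase.mp hq
        intro hadj
        exact hxprop q hqI hqx hadj.symm
      · obtain ⟨hpx, hpI⟩ := Finset.mem_erase.mp hp
        exact hxprop p hpI hpx
      · exact hI p (Finset.mem_of_mem_erase hp) q (Finset.mem_of_mem_erase hq) hpq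
    have hstep : TJStep G k I I' :=
      ⟨hI, hI'indep, hIcard, hI'card, x, hxI, y, hyI, rfl⟩
    have hsd : I' \ J = (I \ J).erase x := by
      ext z
      simp only [hI'def, Finset.mem_sdiff, Finset.mem_insert, Finset.mem_erase]
      constructor
      · rintro ⟨rfl | ⟨hzx, hzI⟩, hzJ⟩
        · exact absurd hyJ hzJ
        · exact ⟨hzx, hzI, hzJ⟩
      · rintro ⟨hzx, hzI, hzJ⟩
        exact ⟨Or.inr ⟨hzx, hzI⟩, hzJ⟩
    have hless : (I' \ J).card ≤ n := by
      rw [hsd, Finset.card_erase_of_mem hxIJ]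
      have := Finset.card_pos.mpr hIsd
      omega
    exact Relation.ReflTransGen.head hstep (ih I' hI'indep hI'card hless)

theorem tj_reach_of_vc_one {V : Type*} [Fintype V] [DecidableEq V]
    (G : SimpleGraph V) (hVC : VCdimLEOne G)
    (hnoincl : ∀ u v : V, u ≠ v → ¬ closedNbhd G u ⊆ closedNbhd G v)
    (k : ℕ) (hk : 3 ≤ k) (I J : Finset V)
    (hI : IsIndep G I) (hJ : IsIndep G J) (hIcard : I.card = k) (hJcard : J.card = k) :
    TJReach G k I J := by
  exact tj_aux G hVC hnoincl k hk J hJ hJcard (I \ J).card I hI hIcard le_rfl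
end
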